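/- arXiv:2412.11091 — 9 statements merged into one kernel-verified Lean document; each statement's English description precedes it below -/
import Mathlib

section
/- For any positive integer n and real p with 0 < p < 1, the sum over t from 0 to n+1 of |B_{n,p}(t-1) - B_{n,p}(t)| is at most (4 / sqrt(p(1-p))) / sqrt(n), where B_{n,p}(t) = binom(n,t) p^t (1-p)^{n-t} and B_{n,p}(t) = 0 for t outside [0,n]. -/
/-- Binomial pmf `B_{n,p}(t)` extended to `ℤ` by zero outside `[0,n]`. -/
noncomputable def binomPMF (n : ℕ) (p : ℝ) (t : ℤ) : ℝ :=
  if 0 ≤ t ∧ t ≤ (n : ℤ) then (n.choose t.toNat : ℝ) * p ^ t.toNat * (1 - p) ^ (n - t.toNat)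
  else 0


lemma binom_sum_one (m : ℕ) (p : ℝ) :
    ∑ t ∈ Finset.range (m + 1), ((m.choose t : ℝ) * p ^ t * (1 - p) ^ (m - t)) = 1 := by
  have h := add_pow p (1 - p) m
  simp only [add_sub_cancel, one_pow] at h
  calc ∑ t ∈ Finset.range (m + 1), ((m.choose t : ℝ) * p ^ t * (1 - p) ^ (m - t))
      = ∑ t ∈ Finset.range (m + 1), p ^ t * (1 - p) ^ (m - t) * (m.choose t : ℝ) :=
        Finset.sum_congr rfl fun t _ => by ring
    _ = 1 := h.symm

lemma binom_variance (m : ℕ) (hm : 0 < m) (p : ℝ) (hp : 0 ≤ p) (hp1 : p ≤ 1) :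
    ∑ t ∈ Finset.range (m + 1),
      ((m.choose t : ℝ) * p ^ t * (1 - p) ^ (m - t)) * ((t : ℝ) - m * p) ^ 2
      = m * (p * (1 - p)) := by
  have hm' : (0 : ℝ) < m := by exact_mod_cast hm
  have hv := bernstein.variance (n := m) hm.ne' ⟨p, hp, hp1⟩
  simp only [bernstein.z, bernstein_apply] at hv
  rw [Finset.sum_range
    (fun t => ((m.choose t : ℝ) * p ^ t * (1 - p) ^ (m - t)) * ((t : ℝ) - m * p) ^ 2)]
  have key : ∀ k : Fin (m + 1),
      ((m.choose (k : ℕ) : ℝ) * p ^ (k : ℕ) * (1 - p) ^ (m - (k : ℕ))) * (((k : ℕ) : ℝ) - m * p) ^ 2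
        = (m : ℝ) ^ 2 * ((p - ((k : ℕ) : ℝ) / m) ^ 2 *
            ((m.choose (k : ℕ) : ℝ) * p ^ (k : ℕ) * (1 - p) ^ (m - (k : ℕ)))) := by
    intro k
    have h2 : ((k : ℕ) : ℝ) - m * p = -((p - ((k : ℕ) : ℝ) / m) * m) := by
      field_simp; ring
    rw [h2]
    ring
  rw [Finset.sum_congr rfl (fun k _ => key k), ← Finset.mul_sum, hv]
  field_simp

lemma binom_key (n : ℕ) (p : ℝ) (hp : p ≠ 0) (hq : (1 : ℝ) - p ≠ 0) (t : ℕ) (ht : t ≤ n + 1) :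
    binomPMF n p ((t : ℤ) - 1) - binomPMF n p (t : ℤ) =
      (((n + 1).choose t : ℝ) * p ^ t * (1 - p) ^ (n + 1 - t)) * ((t : ℝ) - (n + 1) * p) /
        ((n + 1) * (p * (1 - p))) := by
  have hn1 : ((n : ℝ) + 1) ≠ 0 := by positivity
  match t, ht with
  | 0, _ =>
    have c1 : ¬ (0 ≤ ((0 : ℕ) : ℤ) - 1 ∧ ((0 : ℕ) : ℤ) - 1 ≤ (n : ℤ)) := by omega
    have c2 : 0 ≤ ((0 : ℕ) : ℤ) ∧ ((0 : ℕ) : ℤ) ≤ (n : ℤ) := by omega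
    rw [binomPMF, binomPMF, if_neg c1, if_pos c2]
    simp only [Int.toNat_zero, Nat.choose_zero_right, pow_zero, Nat.sub_zero, Nat.cast_one,
      Nat.cast_zero]
    field_simp
    ring
  | (k + 1), ht =>
    have h0 : (((k + 1 : ℕ) : ℤ)) - 1 = (k : ℤ) := by push_cast; ring
    rw [binomPMF, binomPMF, h0]
    rcases Nat.lt_or_ge k n with hk | hk
    · -- 1 ≤ k+1 ≤ n case
      obtain ⟨j, rfl⟩ : ∃ j, n = k + 1 + j := ⟨n - (k + 1), by omega⟩
      have c1 : 0 ≤ (k : ℤ) ∧ (k : ℤ) ≤ ((k + 1 + j : ℕ) : ℤ) := by constructor <;> omega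
      have c2 : 0 ≤ ((k + 1 : ℕ) : ℤ) ∧ ((k + 1 : ℕ) : ℤ) ≤ ((k + 1 + j : ℕ) : ℤ) := by
        constructor <;> omega
      rw [if_pos c1, if_pos c2]
      simp only [Int.toNat_natCast]
      have e1 : k + 1 + j - k = j + 1 := by omega
      have e2 : k + 1 + j - (k + 1) = j := by omega
      have e3 : k + 1 + j + 1 - (k + 1) = j + 1 := by omega
      rw [e1, e2, e3]
      have h1 : (((k + 1 + j + 1).choose (k + 1) : ℕ) : ℝ) * (k + 1) =
          ((k + 1 + j + 1 : ℕ) : ℝ) * ((k + 1 + j).choose k : ℕ) := by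
        exact_mod_cast (Nat.add_one_mul_choose_eq (k + 1 + j) k).symm
      have h2 : (((k + 1 + j + 1).choose (k + 1) : ℕ) : ℝ) * (j + 1) =
          ((k + 1 + j + 1 : ℕ) : ℝ) * ((k + 1 + j).choose (k + 1) : ℕ) := by
        have := Nat.choose_mul_succ_eq (k + 1 + j) (k + 1)
        have e : k + 1 + j + 1 - (k + 1) = j + 1 := by omega
        rw [e, Nat.mul_comm] at this
        exact_mod_cast this.symm
      push_cast
      push_cast at h1 h2
      rw [eq_div_iff (by positivity)]
      linear_combination (-(p ^ (k + 1) * (1 - p) ^ (j + 2))) * h1 +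
        (p ^ (k + 2) * (1 - p) ^ (j + 1)) * h2
    · -- k = n case (since k+1 ≤ n+1 and k ≥ n)
      have hkn : k = n := by omega
      subst hkn
      have c1 : 0 ≤ (k : ℤ) ∧ (k : ℤ) ≤ (k : ℤ) := by omega
      have c2 : ¬ (0 ≤ ((k + 1 : ℕ) : ℤ) ∧ ((k + 1 : ℕ) : ℤ) ≤ (k : ℤ)) := by omega
      rw [if_pos c1, if_neg c2]
      simp only [Int.toNat_natCast, Nat.choose_self, Nat.sub_self, pow_zero, Nat.cast_one]
      push_cast
      rw [eq_div_iff (by positivity)]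
      ring

/-- The sum of successive absolute differences of the binomial distribution is at most
`(4/√(p(1-p)))/√n`. -/
theorem binom_successive_diff (n : ℕ) (hn : 1 ≤ n) (p : ℝ) (hp : 0 < p) (hp1 : p < 1) :
    ∑ t ∈ Finset.range (n + 2), |binomPMF n p ((t : ℤ) - 1) - binomPMF n p (t : ℤ)| ≤
      (4 / Real.sqrt (p * (1 - p))) / Real.sqrt n := by
  have hq : (0 : ℝ) < 1 - p := by linarith
  have hpq : (0 : ℝ) < p * (1 - p) := by positivity
  set B1 : ℕ → ℝ := fun t => (((n + 1).choose t : ℕ) : ℝ) * p ^ t * (1 - p) ^ (n + 1 - t) with hB1def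
  have hB1 : ∀ t, 0 ≤ B1 t := fun t => by
    simp only [hB1def]; positivity
  have hD : (0 : ℝ) < ((n : ℝ) + 1) * (p * (1 - p)) := by positivity
  have hstep : ∀ t ∈ Finset.range (n + 2),
      |binomPMF n p ((t : ℤ) - 1) - binomPMF n p (t : ℤ)| =
        B1 t * |(t : ℝ) - ((n : ℝ) + 1) * p| / (((n : ℝ) + 1) * (p * (1 - p))) := by
    intro t ht
    rw [Finset.mem_range] at ht
    rw [binom_key n p hp.ne' hq.ne' t (by omega)]
    rw [abs_div, abs_mul, abs_of_nonneg (hB1 t), abs_of_pos hD]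
  rw [Finset.sum_congr rfl hstep, ← Finset.sum_div]
  have hCS : ∑ t ∈ Finset.range (n + 2), B1 t * |(t : ℝ) - ((n : ℝ) + 1) * p| ≤
      Real.sqrt (((n : ℝ) + 1) * (p * (1 - p))) := by
    have h1 : ∀ t ∈ Finset.range (n + 2), B1 t * |(t : ℝ) - ((n : ℝ) + 1) * p| =
        Real.sqrt (B1 t) * Real.sqrt (B1 t * ((t : ℝ) - ((n : ℝ) + 1) * p) ^ 2) := by
      intro t _
      rw [Real.sqrt_mul (hB1 t), Real.sqrt_sq_eq_abs, ← mul_assoc, Real.mul_self_sqrt (hB1 t)]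
    rw [Finset.sum_congr rfl h1]
    have h2 := Real.sum_sqrt_mul_sqrt_le (Finset.range (n + 2)) hB1
      (fun t => by positivity : ∀ t, 0 ≤ B1 t * ((t : ℝ) - ((n : ℝ) + 1) * p) ^ 2)
    refine h2.trans_eq ?_
    have hs1 : ∑ t ∈ Finset.range (n + 2), B1 t = 1 := by
      have := binom_sum_one (n + 1) p
      simpa [hB1def] using this
    have hs2 : ∑ t ∈ Finset.range (n + 2), B1 t * ((t : ℝ) - ((n : ℝ) + 1) * p) ^ 2 =
        ((n : ℝ) + 1) * (p * (1 - p)) := by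
      have := binom_variance (n + 1) (by omega) p hp.le hp1.le
      push_cast at this
      simpa [hB1def] using this
    rw [hs1, hs2, Real.sqrt_one, one_mul]
  have hfinal : Real.sqrt (((n : ℝ) + 1) * (p * (1 - p))) / (((n : ℝ) + 1) * (p * (1 - p))) ≤
      (4 / Real.sqrt (p * (1 - p))) / Real.sqrt n := by
    rw [Real.sqrt_div_self']
    have hn0 : (0 : ℝ) < n := by exact_mod_cast hn
    have h3 : (0 : ℝ) < Real.sqrt ((n : ℝ) * (p * (1 - p))) := Real.sqrt_pos.mpr (by positivity)
    have h4 : Real.sqrt ((n : ℝ) * (p * (1 - p))) ≤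
        Real.sqrt (((n : ℝ) + 1) * (p * (1 - p))) := by
      apply Real.sqrt_le_sqrt; nlinarith
    have h5 : 1 / Real.sqrt (((n : ℝ) + 1) * (p * (1 - p))) ≤
        1 / Real.sqrt ((n : ℝ) * (p * (1 - p))) :=
      one_div_le_one_div_of_le h3 h4
    refine h5.trans ?_
    rw [Real.sqrt_mul hn0.le, div_div]
    rw [mul_comm (Real.sqrt (n : ℝ))]
    gcongr
    norm_num
  calc (∑ t ∈ Finset.range (n + 2), B1 t * |(t : ℝ) - ((n : ℝ) + 1) * p|) /
        (((n : ℝ) + 1) * (p * (1 - p)))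
      ≤ Real.sqrt (((n : ℝ) + 1) * (p * (1 - p))) / (((n : ℝ) + 1) * (p * (1 - p))) := by
        gcongr
    _ ≤ _ := hfinal
end

section
/- For any composition t = (t_1,...,t_q) of n (nonnegative integers summing to n) and any probability vector u = (u_1,...,u_q), the multinomial probability satisfies Mult_{n,u}(t) ≤ 2^{-n D_KL(t/n || u)} · sqrt(n) · (prod over i with t_i > 0 of t_i)^{-1/2}, for all sufficiently large n. -/
open Real Finset Nat

lemma sqrtpi_le_stirling (k : ℕ) (hk : 1 ≤ k) : Real.sqrt π ≤ Stirling.stirlingSeq k := by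
  obtain ⟨m, rfl⟩ := Nat.exists_eq_add_of_le hk
  have ht : Filter.Tendsto (Stirling.stirlingSeq ∘ Nat.succ) Filter.atTop (nhds (Real.sqrt π)) :=
    Stirling.tendsto_stirlingSeq_sqrt_pi.comp (Filter.tendsto_add_atTop_nat 1)
  have := Stirling.stirlingSeq'_antitone.le_of_tendsto ht m
  simpa [Nat.succ_eq_add_one, Nat.add_comm] using this

lemma stirling_le (n : ℕ) (hn : 1 ≤ n) : Stirling.stirlingSeq n ≤ Real.exp 1 / Real.sqrt 2 := by
  obtain ⟨m, rfl⟩ := Nat.exists_eq_add_of_le hn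
  have := Stirling.stirlingSeq'_antitone (Nat.zero_le m)
  simpa [Stirling.stirlingSeq_one, Nat.succ_eq_add_one, Nat.add_comm] using this

lemma factorial_upper (n : ℕ) (hn : 1 ≤ n) :
    (n ! : ℝ) ≤ Real.exp 1 * Real.sqrt n * ((n : ℝ) / Real.exp 1) ^ n := by
  have hnp : (0:ℝ) < n := by exact_mod_cast hn
  have hden : (0:ℝ) < Real.sqrt (2 * n) * ((n : ℝ) / Real.exp 1) ^ n := by positivity
  have h := stirling_le n hn
  rw [Stirling.stirlingSeq, div_le_iff₀ hden] at h
  calc (n ! : ℝ) ≤ Real.exp 1 / Real.sqrt 2 * (Real.sqrt (2 * n) * ((n : ℝ) / Real.exp 1) ^ n) := h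
    _ = Real.exp 1 * Real.sqrt n * ((n : ℝ) / Real.exp 1) ^ n := by
        rw [Real.sqrt_mul (by norm_num : (0:ℝ) ≤ 2)]
        field_simp

lemma factorial_lower (k : ℕ) (hk : 1 ≤ k) :
    Real.sqrt (2 * π) * Real.sqrt k * ((k : ℝ) / Real.exp 1) ^ k ≤ (k ! : ℝ) := by
  have hkp : (0:ℝ) < k := by exact_mod_cast hk
  have hden : (0:ℝ) < Real.sqrt (2 * k) * ((k : ℝ) / Real.exp 1) ^ k := by positivity
  have h := sqrtpi_le_stirling k hk
  rw [Stirling.stirlingSeq, le_div_iff₀ hden] at h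
  calc Real.sqrt (2 * π) * Real.sqrt k * ((k : ℝ) / Real.exp 1) ^ k
      = Real.sqrt π * (Real.sqrt (2 * k) * ((k : ℝ) / Real.exp 1) ^ k) := by
        rw [Real.sqrt_mul (by norm_num : (0:ℝ) ≤ 2), Real.sqrt_mul (by norm_num : (0:ℝ) ≤ 2)]
        ring
    _ ≤ (k ! : ℝ) := h


lemma sqrt_prod' {ι} (s : Finset ι) (f : ι → ℝ) (h : ∀ i ∈ s, 0 ≤ f i) :
    Real.sqrt (∏ i ∈ s, f i) = ∏ i ∈ s, Real.sqrt (f i) := by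
  induction s using Finset.cons_induction with
  | empty => simp
  | cons a s ha ih =>
      rw [Finset.prod_cons, Finset.prod_cons,
        Real.sqrt_mul (h a (Finset.mem_cons_self a s)),
        ih fun i hi => h i (Finset.mem_cons_of_mem hi)]


lemma key_mult (q n : ℕ) (hn : 1 ≤ n) (t : Fin q → ℕ) (ht : ∑ i, t i = n) :
    (Nat.multinomial Finset.univ t : ℝ) *
      ((∏ i ∈ Finset.univ.filter fun i => 0 < t i, (t i : ℝ) ^ t i) *
        Real.sqrt (∏ i ∈ Finset.univ.filter fun i => 0 < t i, (t i : ℝ))) ≤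
    (n : ℝ) ^ n * Real.sqrt n := by
  classical
  set S : Finset (Fin q) := Finset.univ.filter fun i => 0 < t i with hS
  have hmemS : ∀ i ∈ S, 1 ≤ t i := fun i hi => (Finset.mem_filter.mp hi).2
  have hSsum : ∑ i ∈ S, t i = n := by
    rw [← ht]
    exact Finset.sum_filter_of_ne fun i _ h => Nat.pos_of_ne_zero h
  have hprodfact : ∏ i ∈ S, (t i)! = ∏ i, (t i)! :=
    Finset.prod_filter_of_ne fun i _ h => by
      rcases Nat.eq_zero_or_pos (t i) with h0 | h0
      · exact absurd (by simp [h0]) h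
      · exact h0
  have hspec : (∏ i, (t i)!) * Nat.multinomial Finset.univ t = n ! := by
    rw [Nat.multinomial_spec, ht]
  set multR : ℝ := (Nat.multinomial Finset.univ t : ℝ) with hmultR
  set A : ℝ := ∏ i ∈ S, (t i : ℝ) ^ t i with hA
  set B : ℝ := Real.sqrt (∏ i ∈ S, (t i : ℝ)) with hB
  set P : ℝ := ∏ i ∈ S, ((t i)! : ℝ) with hP
  have hPn : P * multR = (n ! : ℝ) := by
    rw [hP, hmultR, ← Nat.cast_prod, ← Nat.cast_mul, hprodfact, hspec]
  have hApos : 0 < A := Finset.prod_pos fun i hi => by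
    have := hmemS i hi; positivity
  have hBpos : 0 < B := Real.sqrt_pos.mpr <| Finset.prod_pos fun i hi => by
    exact_mod_cast hmemS i hi
  have hPpos : 0 < P := Finset.prod_pos fun i hi => by positivity
  have hmultnn : (0:ℝ) ≤ multR := Nat.cast_nonneg _
  rcases eq_or_ne S.card 1 with hm | hm
  · -- single support: t j = n, multinomial = 1
    obtain ⟨j, hj⟩ := Finset.card_eq_one.mp hm
    have htj : t j = n := by rw [← hSsum, hj, Finset.sum_singleton]
    have hprodn : ∏ i, (t i)! = n ! := by rw [← hprodfact, hj, Finset.prod_singleton, htj]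
    have hmult1 : Nat.multinomial Finset.univ t = 1 := by
      have := hspec
      rw [hprodn] at this
      exact Nat.eq_of_mul_eq_mul_left (Nat.factorial_pos n) (this.trans (mul_one _).symm)
    rw [hmultR, hmult1, hA, hB, hj, Finset.prod_singleton, Finset.prod_singleton, htj]
    simp
  · -- m ≥ 2
    have hm2 : 2 ≤ S.card := by
      rcases Nat.lt_or_ge S.card 2 with h | h
      · exfalso
        have h0 : S.card = 0 := by omega
        have : S = ∅ := Finset.card_eq_zero.mp h0
        rw [this] at hSsum
        simp at hSsum; omega
      · exact h
    set m := S.card with hmdef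
    have hsq2pi : (1:ℝ) ≤ Real.sqrt (2 * π) := by
      rw [show (1:ℝ) = Real.sqrt 1 by simp]
      exact Real.sqrt_le_sqrt (by nlinarith [Real.pi_gt_three])
    have he : Real.exp 1 ≤ Real.sqrt (2 * π) ^ m := by
      have h1 : Real.exp 1 ≤ 2 * π := by
        nlinarith [Real.exp_one_lt_d9, Real.pi_gt_three]
      calc Real.exp 1 ≤ 2 * π := h1
        _ = Real.sqrt (2 * π) ^ 2 := by
            rw [Real.sq_sqrt (by positivity)]
        _ ≤ Real.sqrt (2 * π) ^ m := pow_le_pow_right₀ hsq2pi hm2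
    -- lower bound on P
    have hPlow : Real.sqrt (2 * π) ^ m * (B * (A / Real.exp 1 ^ n)) ≤ P := by
      have step : ∏ i ∈ S, (Real.sqrt (2 * π) * Real.sqrt (t i) * ((t i : ℝ) / Real.exp 1) ^ t i)
          ≤ P := by
        refine Finset.prod_le_prod (fun i hi => by positivity)
          fun i hi => factorial_lower (t i) (hmemS i hi)
      calc Real.sqrt (2 * π) ^ m * (B * (A / Real.exp 1 ^ n))
          = ∏ i ∈ S, (Real.sqrt (2 * π) * Real.sqrt (t i) * ((t i : ℝ) / Real.exp 1) ^ t i) := by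
            rw [Finset.prod_mul_distrib, Finset.prod_mul_distrib, Finset.prod_const]
            rw [hB, sqrt_prod' S _ fun i _ => by positivity]
            have : ∏ i ∈ S, ((t i : ℝ) / Real.exp 1) ^ t i = A / Real.exp 1 ^ n := by
              simp_rw [div_pow]
              rw [Finset.prod_div_distrib, Finset.prod_pow_eq_pow_sum, hSsum, hA]
            rw [this]
            ring
        _ ≤ P := step
    have hN : (n ! : ℝ) ≤ Real.exp 1 * Real.sqrt n * ((n:ℝ) ^ n / Real.exp 1 ^ n) := by
      have := factorial_upper n hn
      rwa [div_pow] at this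
    have hexpn : (0:ℝ) < Real.exp 1 ^ n := by positivity
    have main : multR * (A * B) * Real.exp 1 ≤ (n:ℝ) ^ n * Real.sqrt n * Real.exp 1 := by
      calc multR * (A * B) * Real.exp 1
          ≤ multR * (A * B) * Real.sqrt (2 * π) ^ m := by
            have hab : (0:ℝ) ≤ multR * (A * B) := by positivity
            exact mul_le_mul_of_nonneg_left he hab
        _ = multR * (Real.sqrt (2 * π) ^ m * (B * (A / Real.exp 1 ^ n))) * Real.exp 1 ^ n := by
            field_simp
        _ ≤ multR * P * Real.exp 1 ^ n := by
            have := mul_le_mul_of_nonneg_left hPlow hmultnn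
            exact mul_le_mul_of_nonneg_right this hexpn.le
        _ = (n ! : ℝ) * Real.exp 1 ^ n := by rw [← hPn]; ring
        _ ≤ (Real.exp 1 * Real.sqrt n * ((n:ℝ) ^ n / Real.exp 1 ^ n)) * Real.exp 1 ^ n := by
            exact mul_le_mul_of_nonneg_right hN hexpn.le
        _ = (n:ℝ) ^ n * Real.sqrt n * Real.exp 1 := by
            field_simp
    exact le_of_mul_le_mul_right main (Real.exp_pos 1)



lemma two_rpow_sum {ι} (s : Finset ι) (f : ι → ℝ) :
    (2:ℝ) ^ (∑ i ∈ s, f i) = ∏ i ∈ s, (2:ℝ) ^ f i := by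
  induction s using Finset.cons_induction with
  | empty => simp
  | cons a s ha ih => rw [Finset.sum_cons, Finset.prod_cons, Real.rpow_add two_pos, ih]

/-- Multinomial pmf with `n` trials and category probabilities `u`, defined on all of
`Fin q → ℕ` (zero off the simplex `∑ t i = n`). -/
noncomputable def multPMF (q n : ℕ) (u : Fin q → ℝ) (t : Fin q → ℕ) : ℝ :=
  if (∑ i, t i) = n then (Nat.multinomial Finset.univ t : ℝ) * ∏ i, u i ^ t i else 0

/-- For all sufficiently large `n` and any composition `t` of `n`,
`Mult_{n,u}(t) ≤ 2^{-n·D_KL(t/n‖u)} · √n · (∏_{i : t_i>0} t_i)^{-1/2}`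
(with conventions `0·log 0 = 0`; logs base 2). -/
theorem multinomial_kl_bound (q : ℕ) (hq : 2 ≤ q) (u : Fin q → ℝ)
    (hu0 : ∀ i, 0 ≤ u i) (hu1 : ∑ i, u i = 1) :
    ∃ N : ℕ, ∀ n ≥ N, ∀ t : Fin q → ℕ, (∑ i, t i) = n →
      multPMF q n u t ≤
        (2 : ℝ) ^ (-(n : ℝ) *
            ∑ i, (if t i = 0 then 0
              else ((t i : ℝ) / n) * Real.logb 2 (((t i : ℝ) / n) / u i))) *
          Real.sqrt n *
          (∏ i ∈ Finset.univ.filter fun i => 0 < t i, (t i : ℝ)) ^ (-(1 / 2) : ℝ) := by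
  classical
  refine ⟨1, fun n hn t ht => ?_⟩
  set S : Finset (Fin q) := Finset.univ.filter fun i => 0 < t i with hSdef
  have hn0 : (n:ℝ) ≠ 0 := by exact_mod_cast Nat.one_le_iff_ne_zero.mp hn
  have hnpos : (0:ℝ) < n := by exact_mod_cast hn
  have hmemS : ∀ i ∈ S, 1 ≤ t i := fun i hi => (Finset.mem_filter.mp hi).2
  have hSsum : ∑ i ∈ S, t i = n := by
    rw [← ht]
    exact Finset.sum_filter_of_ne fun i _ h => Nat.pos_of_ne_zero h
  have hXpos : (0:ℝ) < ∏ i ∈ S, (t i : ℝ) :=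
    Finset.prod_pos fun i hi => by exact_mod_cast hmemS i hi
  rw [multPMF, if_pos ht]
  by_cases hzero : ∃ i ∈ S, u i = 0
  · obtain ⟨i, hiS, hi0⟩ := hzero
    have h0 : ∏ i, u i ^ t i = 0 :=
      Finset.prod_eq_zero (Finset.mem_univ i)
        (by rw [hi0]; exact zero_pow (Nat.pos_iff_ne_zero.mp (hmemS i hiS)))
    rw [h0, mul_zero]
    positivity
  · push_neg at hzero
    have hupos : ∀ i ∈ S, 0 < u i := fun i hi => (hu0 i).lt_of_ne (Ne.symm (hzero i hi))
    -- rewrite the exponent sum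
    have hsum : ∑ i, (if t i = 0 then 0
          else ((t i : ℝ) / n) * Real.logb 2 (((t i : ℝ) / n) / u i))
        = ∑ i ∈ S, ((t i : ℝ) / n) * Real.logb 2 (((t i : ℝ) / n) / u i) := by
      rw [hSdef, Finset.sum_filter]
      refine Finset.sum_congr rfl fun i _ => ?_
      by_cases h : t i = 0
      · simp [h]
      · simp [h, Nat.pos_of_ne_zero h]
    have hexp : -(n:ℝ) * ∑ i ∈ S, ((t i : ℝ) / n) * Real.logb 2 (((t i : ℝ) / n) / u i)
        = ∑ i ∈ S, (-(t i : ℝ)) * Real.logb 2 ((t i : ℝ) / ((n:ℝ) * u i)) := by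
      rw [Finset.mul_sum]
      refine Finset.sum_congr rfl fun i hi => ?_
      rw [div_div]
      field_simp
    have hterm : ∀ i ∈ S, (2:ℝ) ^ ((-(t i : ℝ)) * Real.logb 2 ((t i : ℝ) / ((n:ℝ) * u i)))
        = (((n:ℝ) * u i) / (t i : ℝ)) ^ t i := by
      intro i hi
      have hr : (0:ℝ) < (t i : ℝ) / ((n:ℝ) * u i) := by
        have h1 : (0:ℝ) < (t i : ℝ) := by exact_mod_cast hmemS i hi
        have h2 := hupos i hi
        positivity
      rw [mul_comm, Real.rpow_mul (by norm_num : (0:ℝ) ≤ 2),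
        Real.rpow_logb (by norm_num) (by norm_num) hr,
        Real.rpow_neg hr.le, Real.rpow_natCast, ← inv_pow, inv_div]
    rw [hsum, hexp, two_rpow_sum, Finset.prod_congr rfl hterm]
    -- rewrite the u-product on the left
    have hUprod : ∏ i, u i ^ t i = ∏ i ∈ S, u i ^ t i :=
      (Finset.prod_filter_of_ne fun i _ h => by
        rcases Nat.eq_zero_or_pos (t i) with h0 | h0
        · exact absurd (by simp [h0]) h
        · exact h0).symm
    rw [hUprod]
    -- split the product on the right
    have hsplit : ∏ i ∈ S, (((n:ℝ) * u i) / (t i : ℝ)) ^ t i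
        = (∏ i ∈ S, u i ^ t i) * ((n:ℝ) ^ n / ∏ i ∈ S, (t i : ℝ) ^ t i) := by
      have : ∀ i ∈ S, (((n:ℝ) * u i) / (t i : ℝ)) ^ t i
          = u i ^ t i * (((n:ℝ) / (t i : ℝ)) ^ t i) := by
        intro i hi
        rw [← mul_pow]
        congr 1
        ring
      rw [Finset.prod_congr rfl this, Finset.prod_mul_distrib]
      congr 1
      simp_rw [div_pow]
      rw [Finset.prod_div_distrib, Finset.prod_pow_eq_pow_sum, hSsum]
    rw [hsplit]
    -- rewrite the rpow factor
    have hrpow : (∏ i ∈ S, (t i : ℝ)) ^ (-(1 / 2) : ℝ)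
        = (Real.sqrt (∏ i ∈ S, (t i : ℝ)))⁻¹ := by
      rw [Real.rpow_neg hXpos.le, Real.sqrt_eq_rpow]
    rw [hrpow]
    have hU : (0:ℝ) < ∏ i ∈ S, u i ^ t i :=
      Finset.prod_pos fun i hi => pow_pos (hupos i hi) _
    have hApos : (0:ℝ) < ∏ i ∈ S, (t i : ℝ) ^ t i :=
      Finset.prod_pos fun i hi => by
        have := hmemS i hi; positivity
    have hBpos : (0:ℝ) < Real.sqrt (∏ i ∈ S, (t i : ℝ)) := Real.sqrt_pos.mpr hXpos
    have key := key_mult q n hn t ht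
    rw [← hSdef] at key
    have hmain : (Nat.multinomial Finset.univ t : ℝ)
        ≤ (n:ℝ) ^ n / (∏ i ∈ S, (t i : ℝ) ^ t i) * Real.sqrt n
            * (Real.sqrt (∏ i ∈ S, (t i : ℝ)))⁻¹ := by
      have hre : (n:ℝ) ^ n / (∏ i ∈ S, (t i : ℝ) ^ t i) * Real.sqrt n
            * (Real.sqrt (∏ i ∈ S, (t i : ℝ)))⁻¹
          = ((n:ℝ) ^ n * Real.sqrt n)
            / ((∏ i ∈ S, (t i : ℝ) ^ t i) * Real.sqrt (∏ i ∈ S, (t i : ℝ))) := by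
        field_simp
      rw [hre, le_div_iff₀ (by positivity)]
      exact key
    calc (Nat.multinomial Finset.univ t : ℝ) * ∏ i ∈ S, u i ^ t i
        ≤ ((n:ℝ) ^ n / (∏ i ∈ S, (t i : ℝ) ^ t i) * Real.sqrt n
            * (Real.sqrt (∏ i ∈ S, (t i : ℝ)))⁻¹) * ∏ i ∈ S, u i ^ t i :=
          mul_le_mul_of_nonneg_right hmain hU.le
      _ = (∏ i ∈ S, u i ^ t i) * ((n:ℝ) ^ n / ∏ i ∈ S, (t i : ℝ) ^ t i) * Real.sqrt n
            * (Real.sqrt (∏ i ∈ S, (t i : ℝ)))⁻¹ := by ring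
end

section
/- For a constant K > 1, a probability vector u on [1:q], and a composition t of n with |t_i - (n+1)u_i| ≥ K·sqrt(n log n) for some index i, the multinomial probability satisfies Mult_{n,u}(t) ≤ n^{-(K²-1)/2} for all sufficiently large n. -/
open Finset Real

section
variable {ι : Type*} [Fintype ι]

noncomputable def bhattacharyyaCoeff (p u : ι → ℝ) : ℝ := ∑ i, √(p i * u i)

theorem multinomial_mul_prod_pow_le_one [DecidableEq ι] {p : ι → ℝ} (hp0 : ∀ i, 0 ≤ p i)
    (hp1 : ∑ i, p i = 1) (t : ι → ℕ) :
    (Nat.multinomial univ t : ℝ) * ∏ i, p i ^ t i ≤ 1 := by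
  have hexpand := sum_pow_eq_sum_piAntidiag univ p (∑ i, t i)
  rw [hp1, one_pow] at hexpand
  rw [hexpand]
  exact single_le_sum (f := fun k => (Nat.multinomial univ k : ℝ) * ∏ i, p i ^ k i)
    (fun k _ => mul_nonneg (by positivity) (prod_nonneg fun i _ => pow_nonneg (hp0 i) _))
    (by simp [mem_piAntidiag])

theorem sum_natCast_div_eq_one {n : ℕ} (hn : 0 < n) {t : ι → ℕ} (ht : ∑ i, t i = n) :
    ∑ i, (t i : ℝ) / n = 1 := by
  rw [← sum_div, ← Nat.cast_sum, ht, div_self (by positivity)]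

theorem pow_le_pow_mul_exp_sqrt {p u c : ℝ} (hp : 0 ≤ p) (hu : 0 ≤ u) {m : ℕ}
    (hm : (m : ℝ) = c * p) : u ^ m ≤ p ^ m * exp (2 * (c * √(p * u) - m)) := by
  rcases hp.eq_or_lt with rfl | hp
  · obtain rfl : m = 0 := by exact_mod_cast hm.trans (mul_zero c)
    simp
  set x := √(u / p)
  have hx : x ≤ exp (x - 1) := by linarith [add_one_le_exp (x - 1)]
  have hpx : p * x = √(p * u) := by
    rw [show p * u = p ^ 2 * (u / p) by field_simp, sqrt_mul (sq_nonneg p), sqrt_sq hp.le]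
  calc u ^ m = p ^ m * (x ^ 2) ^ m := by
        rw [sq_sqrt (by positivity), ← mul_pow, mul_div_cancel₀ _ hp.ne']
    _ ≤ p ^ m * (exp (x - 1) ^ 2) ^ m := by gcongr
    _ = p ^ m * exp (2 * (c * √(p * u) - m)) := by
        rw [← exp_nat_mul, ← exp_nat_mul, ← hpx]
        congr 2
        push_cast
        linear_combination 2 * x * hm

theorem multinomial_mul_prod_pow_le_exp [DecidableEq ι] {u : ι → ℝ} (hu0 : ∀ i, 0 ≤ u i)
    {n : ℕ} (hn : 0 < n) {t : ι → ℕ} (ht : ∑ i, t i = n) :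
    (Nat.multinomial univ t : ℝ) * ∏ i, u i ^ t i ≤
      exp (-(2 * n) * (1 - bhattacharyyaCoeff (fun i => (t i : ℝ) / n) u)) := by
  set p : ι → ℝ := fun i => (t i : ℝ) / n
  have hp0 : ∀ i, 0 ≤ p i := fun i => by positivity
  have hcount (i : ι) : (t i : ℝ) = n * p i := by
    simp only [p]; rw [mul_div_cancel₀ _ (Nat.cast_ne_zero.mpr hn.ne')]
  have hterm (i : ι) : u i ^ t i ≤ p i ^ t i * exp (2 * (n * √(p i * u i) - t i)) :=
    pow_le_pow_mul_exp_sqrt (hp0 i) (hu0 i) (hcount i)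
  calc (Nat.multinomial univ t : ℝ) * ∏ i, u i ^ t i
      ≤ (Nat.multinomial univ t : ℝ) * ∏ i, (p i ^ t i * exp (2 * (n * √(p i * u i) - t i))) := by
        gcongr with i
        · exact fun i _ => pow_nonneg (hu0 i) _
        · exact hterm i
    _ = ((Nat.multinomial univ t : ℝ) * ∏ i, p i ^ t i) *
          exp (∑ i, 2 * (n * √(p i * u i) - t i)) := by
        rw [prod_mul_distrib, exp_sum]; ring
    _ ≤ 1 * exp (∑ i, 2 * (n * √(p i * u i) - t i)) := by
        gcongr
        exact multinomial_mul_prod_pow_le_one hp0 (sum_natCast_div_eq_one hn ht) t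
    _ = exp (-(2 * n) * (1 - bhattacharyyaCoeff p u)) := by
        rw [one_mul, bhattacharyyaCoeff, ← mul_sum, sum_sub_distrib, ← mul_sum, ← Nat.cast_sum,
          ht]
        ring_nf

theorem two_mul_abs_sub_le_sum_abs_sub [DecidableEq ι] {p u : ι → ℝ}
    (h : ∑ j, p j = ∑ j, u j) (i : ι) : 2 * |p i - u i| ≤ ∑ j, |p j - u j| := by
  have hzero : ∑ j, (p j - u j) = 0 := by rw [sum_sub_distrib, h, sub_self]
  have hrest : ∑ j ∈ univ.erase i, (p j - u j) = -(p i - u i) := by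
    have := add_sum_erase univ (fun j => p j - u j) (mem_univ i)
    rw [hzero] at this
    linarith
  calc 2 * |p i - u i| = |p i - u i| + |∑ j ∈ univ.erase i, (p j - u j)| := by
        rw [hrest, abs_neg]; ring
    _ ≤ |p i - u i| + ∑ j ∈ univ.erase i, |p j - u j| := by
        gcongr; exact abs_sum_le_sum_abs _ _
    _ = ∑ j, |p j - u j| := add_sum_erase _ (fun j => |p j - u j|) (mem_univ i)

theorem sq_sum_abs_sub_le_eight_mul_one_sub_bhattacharyyaCoeff {p u : ι → ℝ}
    (hp0 : ∀ i, 0 ≤ p i) (hp1 : ∑ i, p i = 1) (hu0 : ∀ i, 0 ≤ u i) (hu1 : ∑ i, u i = 1) :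
    (∑ i, |p i - u i|) ^ 2 ≤ 8 * (1 - bhattacharyyaCoeff p u) := by
  set B := bhattacharyyaCoeff p u
  have hminus : ∑ i, (√(p i) - √(u i)) ^ 2 = 2 - 2 * B := by
    have (i : ι) : (√(p i) - √(u i)) ^ 2 = p i + u i - 2 * √(p i * u i) := by
      rw [sqrt_mul (hp0 i), sub_sq, sq_sqrt (hp0 i), sq_sqrt (hu0 i)]; ring
    simp only [this, sum_sub_distrib, sum_add_distrib, ← mul_sum, hp1, hu1, B,
      bhattacharyyaCoeff]
    ring
  have hplus : ∑ i, (√(p i) + √(u i)) ^ 2 = 2 + 2 * B := by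
    have (i : ι) : (√(p i) + √(u i)) ^ 2 = p i + u i + 2 * √(p i * u i) := by
      rw [sqrt_mul (hp0 i), add_sq, sq_sqrt (hp0 i), sq_sqrt (hu0 i)]; ring
    simp only [this, sum_add_distrib, ← mul_sum, hp1, hu1, B, bhattacharyyaCoeff]
    ring
  have hfactor (i : ι) : |p i - u i| = |√(p i) - √(u i)| * (√(p i) + √(u i)) := by
    conv_lhs => rw [← sq_sqrt (hp0 i), ← sq_sqrt (hu0 i)]
    rw [sq_sub_sq, abs_mul, abs_of_nonneg (by positivity : 0 ≤ √(p i) + √(u i)), mul_comm]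
  have hB0 : 0 ≤ B := sum_nonneg fun i _ => sqrt_nonneg _
  have hB1 : B ≤ 1 := by
    linarith [hminus ▸ sum_nonneg fun i (_ : i ∈ univ) => sq_nonneg (√(p i) - √(u i))]
  calc (∑ i, |p i - u i|) ^ 2 = (∑ i, |√(p i) - √(u i)| * (√(p i) + √(u i))) ^ 2 := by
        simp only [hfactor]
    _ ≤ (∑ i, |√(p i) - √(u i)| ^ 2) * ∑ i, (√(p i) + √(u i)) ^ 2 :=
        sum_mul_sq_le_sq_mul_sq _ _ _
    _ = (2 - 2 * B) * (2 + 2 * B) := by simp only [sq_abs, hminus, hplus]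
    _ ≤ 8 * (1 - B) := by nlinarith

theorem sq_sub_le_two_mul_one_sub_bhattacharyyaCoeff [DecidableEq ι] {p u : ι → ℝ}
    (hp0 : ∀ i, 0 ≤ p i) (hp1 : ∑ i, p i = 1) (hu0 : ∀ i, 0 ≤ u i) (hu1 : ∑ i, u i = 1)
    (i : ι) : (p i - u i) ^ 2 ≤ 2 * (1 - bhattacharyyaCoeff p u) := by
  have htv := pow_le_pow_left₀ (by positivity)
    (two_mul_abs_sub_le_sum_abs_sub (hp1.trans hu1.symm) i) 2
  have hhel := sq_sum_abs_sub_le_eight_mul_one_sub_bhattacharyyaCoeff hp0 hp1 hu0 hu1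
  rw [mul_pow, sq_abs] at htv
  linarith

end

theorem multPMF_le_exp_neg_sq_div {q n : ℕ} (hn : 0 < n) {u : Fin q → ℝ} (hu0 : ∀ i, 0 ≤ u i)
    (hu1 : ∑ i, u i = 1) {t : Fin q → ℕ} (ht : ∑ i, t i = n) (i : Fin q) :
    multPMF q n u t ≤ exp (-(((t i : ℝ) - n * u i) ^ 2 / n)) := by
  rw [multPMF, if_pos ht]
  refine (multinomial_mul_prod_pow_le_exp hu0 hn ht).trans (exp_le_exp.mpr ?_)
  have hdev := sq_sub_le_two_mul_one_sub_bhattacharyyaCoeff (fun j => by positivity)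
    (sum_natCast_div_eq_one hn ht) hu0 hu1 i
  have hnR : (0 : ℝ) < n := by exact_mod_cast hn
  have hscale : ((t i : ℝ) - n * u i) ^ 2 / n = n * ((t i : ℝ) / n - u i) ^ 2 := by
    field_simp
  rw [hscale]
  nlinarith

theorem multinomial_tail_bound_general (q : ℕ) (K : ℝ) (hK : 1 < K)
    (u : Fin q → ℝ) (hu0 : ∀ i, 0 ≤ u i) (hu1 : ∑ i, u i = 1) :
    ∃ N : ℕ, ∀ n ≥ N, ∀ t : Fin q → ℕ, (∑ i, t i) = n →
      (∃ i, K * Real.sqrt ((n : ℝ) * Real.log n) ≤ |(t i : ℝ) - ((n : ℝ) + 1) * u i|) →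
      multPMF q n u t ≤ (n : ℝ) ^ (-(K ^ 2 - 1) / 2) := by
  refine ⟨3, fun n hn t ht ⟨i, hi⟩ => ?_⟩
  have hn3 : (3 : ℝ) ≤ n := by exact_mod_cast hn
  have hlog : 1 ≤ log n := by
    rw [le_log_iff_exp_le (by positivity)]; linarith [exp_one_lt_d9]
  set L := √(n * log n)
  have hL2 : L ^ 2 = n * log n := sq_sqrt (by positivity)
  have hL : 1 ≤ L := one_le_sqrt.mpr (by nlinarith)
  have hui : u i ≤ 1 := hu1 ▸ single_le_sum (fun j _ => hu0 j) (mem_univ i)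
  have hdev : K * L - 1 ≤ |(t i : ℝ) - n * u i| := by
    have htri := abs_sub ((t i : ℝ) - n * u i) (u i)
    rw [abs_of_nonneg (hu0 i), show (t i : ℝ) - n * u i - u i = t i - (n + 1) * u i by ring]
      at htri
    linarith
  -- (K L - 1)² - (K² - 1) L² / 2 = ((K L - 2)² + L² - 2) / 2
  have hsq : (K ^ 2 - 1) / 2 * (n * log n) ≤ ((t i : ℝ) - n * u i) ^ 2 := by
    rw [← hL2, ← sq_abs ((t i : ℝ) - n * u i)]
    nlinarith [pow_le_pow_left₀ (by nlinarith) hdev 2, sq_nonneg (K * L - 2)]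
  calc multPMF q n u t ≤ exp (-(((t i : ℝ) - n * u i) ^ 2 / n)) :=
        multPMF_le_exp_neg_sq_div (by omega) hu0 hu1 ht i
    _ ≤ exp (log n * (-(K ^ 2 - 1) / 2)) := by
        gcongr
        have hexp : (K ^ 2 - 1) / 2 * log n ≤ ((t i : ℝ) - n * u i) ^ 2 / n := by
          rw [le_div_iff₀ (by positivity)]; linarith
        linarith
    _ = (n : ℝ) ^ (-(K ^ 2 - 1) / 2) := (rpow_def_of_pos (by positivity) _).symm

/-- If some coordinate of a composition `t` of `n` deviates from `(n+1)u_i` by at least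
`K√(n log n)` with `K > 1`, then `Mult_{n,u}(t) ≤ n^{-(K²-1)/2}` for all large `n`. -/
theorem multinomial_tail_bound (q : ℕ) (hq : 2 ≤ q) (K : ℝ) (hK : 1 < K)
    (u : Fin q → ℝ) (hu0 : ∀ i, 0 ≤ u i) (hu1 : ∑ i, u i = 1) :
    ∃ N : ℕ, ∀ n ≥ N, ∀ t : Fin q → ℕ, (∑ i, t i) = n →
      (∃ i, K * Real.sqrt ((n : ℝ) * Real.log n) ≤ |(t i : ℝ) - ((n : ℝ) + 1) * u i|) →
      multPMF q n u t ≤ (n : ℝ) ^ (-(K ^ 2 - 1) / 2) :=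
  multinomial_tail_bound_general q K hK u hu0 hu1
end

section
/- For a probability vector u on [1:q] with support of size k (all positive entries u_i for i in the support), the maximum over compositions t of n of the multinomial probability Mult_{n,u}(t) is at most 2 / (n^{(k-1)/2} · sqrt(prod over i in supp(u) of u_i)), for all sufficiently large n. -/
set_option maxHeartbeats 1000000

section Aux
open Finset Real

open Finset Real

lemma aux_sqrt_prod {ι : Type*} (s : Finset ι) (f : ι → ℝ) (h : ∀ i ∈ s, 0 ≤ f i) :
    Real.sqrt (∏ i ∈ s, f i) = ∏ i ∈ s, Real.sqrt (f i) := by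
  induction s using Finset.cons_induction with
  | empty => simp
  | cons a s ha ih =>
    rw [Finset.prod_cons, Finset.prod_cons,
      Real.sqrt_mul (h a (Finset.mem_cons_self a s)), ih (fun i hi => h i (Finset.mem_cons.2 (Or.inr hi)))]

lemma aux_fact_upper (n : ℕ) (hn : 1 ≤ n) :
    (Nat.factorial n : ℝ) ≤ Real.exp 1 * Real.sqrt n * ((n : ℝ) / Real.exp 1) ^ n := by
  have h1 : Stirling.stirlingSeq n ≤ Stirling.stirlingSeq 1 := by
    obtain ⟨m, rfl⟩ := Nat.exists_eq_add_of_le hn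
    rw [Nat.add_comm]
    exact Stirling.stirlingSeq'_antitone (Nat.zero_le m)
  have hpos : (0:ℝ) < Real.sqrt (2 * n) * ((n : ℝ) / Real.exp 1) ^ n := by
    have : (0:ℝ) < (n:ℝ) := by exact_mod_cast hn
    positivity
  have h2 : (Nat.factorial n : ℝ) = Stirling.stirlingSeq n * (Real.sqrt (2 * n) * ((n : ℝ) / Real.exp 1) ^ n) := by
    rw [Stirling.stirlingSeq, div_mul_cancel₀ _ hpos.ne']
  rw [h2]
  have h3 : Real.sqrt (2 * (n:ℝ)) = Real.sqrt 2 * Real.sqrt n := Real.sqrt_mul (by norm_num) _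
  calc Stirling.stirlingSeq n * (Real.sqrt (2 * n) * ((n : ℝ) / Real.exp 1) ^ n)
      ≤ (Real.exp 1 / Real.sqrt 2) * (Real.sqrt (2 * n) * ((n : ℝ) / Real.exp 1) ^ n) := by
        apply mul_le_mul_of_nonneg_right _ hpos.le
        rw [show Real.exp 1 / Real.sqrt 2 = Stirling.stirlingSeq 1 from (Stirling.stirlingSeq_one).symm]
        exact h1
    _ = Real.exp 1 * Real.sqrt n * ((n : ℝ) / Real.exp 1) ^ n := by
        push_cast
        rw [h3]
        have : Real.sqrt 2 ≠ 0 := by positivity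
        field_simp

lemma aux_fact_lower (n : ℕ) :
    Real.sqrt π * Real.sqrt 2 * Real.sqrt n * ((n : ℝ) / Real.exp 1) ^ n ≤ (Nat.factorial n : ℝ) := by
  rcases Nat.eq_zero_or_pos n with rfl | hn
  · simp
  have h1 : Real.sqrt π ≤ Stirling.stirlingSeq n := by
    obtain ⟨m, rfl⟩ := Nat.exists_eq_add_of_le hn
    have := Stirling.stirlingSeq'_antitone.le_of_tendsto
      (Stirling.tendsto_stirlingSeq_sqrt_pi.comp (Filter.tendsto_add_atTop_nat 1)) m
    rw [Nat.add_comm]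
    simpa using this
  have hpos : (0:ℝ) < Real.sqrt (2 * n) * ((n : ℝ) / Real.exp 1) ^ n := by
    have : (0:ℝ) < (n:ℝ) := by exact_mod_cast hn
    positivity
  have h2 : (Nat.factorial n : ℝ) = Stirling.stirlingSeq n * (Real.sqrt (2 * n) * ((n : ℝ) / Real.exp 1) ^ n) := by
    rw [Stirling.stirlingSeq, div_mul_cancel₀ _ hpos.ne']
  have h3 : Real.sqrt (2 * (n:ℝ)) = Real.sqrt 2 * Real.sqrt n := Real.sqrt_mul (by norm_num) _
  rw [h2]
  calc Real.sqrt π * Real.sqrt 2 * Real.sqrt n * ((n : ℝ) / Real.exp 1) ^ n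
      = Real.sqrt π * (Real.sqrt (2*(n:ℝ)) * ((n : ℝ) / Real.exp 1) ^ n) := by rw [h3]; ring
    _ ≤ Stirling.stirlingSeq n * (Real.sqrt (2 * n) * ((n : ℝ) / Real.exp 1) ^ n) := by
        push_cast
        exact mul_le_mul_of_nonneg_right h1 (by push_cast at hpos; exact hpos.le)

open Finset Real

/-- Key elementary inequality: `a^t √a ≤ t^t √t e^(1/4 + a - t)` for `a > 0`, `t ≥ 1`. -/
lemma aux_key (a : ℝ) (t : ℕ) (ha : 0 < a) (ht : 1 ≤ t) :
    a ^ t * Real.sqrt a ≤ (t : ℝ) ^ t * Real.sqrt t * Real.exp (1/4 + a - t) := by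
  set T : ℝ := (t : ℝ) with hT
  have hT1 : (1:ℝ) ≤ T := by rw [hT]; exact_mod_cast ht
  have hTpos : (0:ℝ) < T := by linarith
  -- log inequality
  have hx1 : (0:ℝ) < 2 * a / (2 * T + 1) := by positivity
  have hx2 : (0:ℝ) < (2 * T + 1) / (2 * T) := by positivity
  have l1 : Real.log (2 * a / (2 * T + 1)) ≤ 2 * a / (2 * T + 1) - 1 :=
    Real.log_le_sub_one_of_pos hx1
  have l2 : Real.log ((2 * T + 1) / (2 * T)) ≤ (2 * T + 1) / (2 * T) - 1 :=
    Real.log_le_sub_one_of_pos hx2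
  have hsplit : Real.log a - Real.log T
      = Real.log (2 * a / (2 * T + 1)) + Real.log ((2 * T + 1) / (2 * T)) := by
    rw [← Real.log_mul hx1.ne' hx2.ne']
    rw [show 2 * a / (2 * T + 1) * ((2 * T + 1) / (2 * T)) = a / T by
      field_simp]
    exact (Real.log_div ha.ne' hTpos.ne').symm
  have hmul : (T + 1/2) * (Real.log a - Real.log T) ≤ 1/4 + a - T := by
    have h1 : (T + 1/2) * (2 * a / (2 * T + 1) - 1) = a - T - 1/2 := by
      field_simp; ring
    have h2 : (T + 1/2) * ((2 * T + 1) / (2 * T) - 1) = (2*T+1)/(4*T) := by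
      field_simp; ring
    have h3 : (2*T+1)/(4*T) ≤ 3/4 := by
      rw [div_le_iff₀ (by positivity)]
      nlinarith
    have hpos : (0:ℝ) ≤ T + 1/2 := by linarith
    calc (T + 1/2) * (Real.log a - Real.log T)
        = (T + 1/2) * Real.log (2 * a / (2 * T + 1))
          + (T + 1/2) * Real.log ((2 * T + 1) / (2 * T)) := by rw [hsplit]; ring
      _ ≤ (T + 1/2) * (2 * a / (2 * T + 1) - 1)
          + (T + 1/2) * ((2 * T + 1) / (2 * T) - 1) := by
          exact add_le_add (mul_le_mul_of_nonneg_left l1 hpos)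
            (mul_le_mul_of_nonneg_left l2 hpos)
      _ = (a - T - 1/2) + (2*T+1)/(4*T) := by rw [h1, h2]
      _ ≤ 1/4 + a - T := by linarith
  -- exponentiate
  have hLHS : a ^ t * Real.sqrt a = Real.exp (T * Real.log a + Real.log a / 2) := by
    rw [Real.exp_add]
    congr 1
    · rw [← Real.log_pow, Real.exp_log (by positivity)]
    · rw [← Real.log_sqrt ha.le, Real.exp_log (Real.sqrt_pos.2 ha)]
  have hRHS : (T : ℝ) ^ t * Real.sqrt T * Real.exp (1/4 + a - T)
      = Real.exp (T * Real.log T + Real.log T / 2 + (1/4 + a - T)) := by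
    rw [Real.exp_add, Real.exp_add]
    congr 2
    · rw [← Real.log_pow, Real.exp_log (by positivity)]
    · rw [← Real.log_sqrt hTpos.le, Real.exp_log (Real.sqrt_pos.2 hTpos)]
  rw [hLHS, hT] at *
  rw [hRHS]
  apply Real.exp_le_exp.2
  nlinarith [hmul]

lemma aux_quarter_le : Real.exp (1/4) ≤ Real.sqrt π * Real.sqrt 2 := by
  have h1 : Real.exp (1/4) ^ 4 = Real.exp 1 := by
    rw [← Real.exp_nat_mul]; norm_num
  have h2 : (Real.sqrt π * Real.sqrt 2) ^ 4 = π ^ 2 * 4 := by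
    rw [mul_pow, show (4:ℕ) = 2*2 from rfl, pow_mul, pow_mul,
      Real.sq_sqrt Real.pi_pos.le, Real.sq_sqrt (by norm_num : (0:ℝ) ≤ 2)]
    ring
  have h3 : Real.exp 1 ≤ π ^ 2 * 4 := by
    nlinarith [Real.exp_one_lt_d9, Real.pi_gt_three]
  have h4 : Real.exp (1/4) ^ 4 ≤ (Real.sqrt π * Real.sqrt 2) ^ 4 := by
    rw [h1, h2]; exact h3
  exact le_of_pow_le_pow_left₀ (by norm_num) (by positivity) h4

lemma aux_base : Real.exp 1 * Real.exp (1/4) ≤ 2 * (Real.sqrt π * Real.sqrt 2) := by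
  have h1 : (Real.exp 1 * Real.exp (1/4)) ^ 4 = Real.exp 5 := by
    rw [← Real.exp_add, ← Real.exp_nat_mul]; norm_num
  have hp4 : Real.sqrt π ^ 4 = π ^ 2 := by
    rw [show (4:ℕ) = 2*2 from rfl, pow_mul, Real.sq_sqrt Real.pi_pos.le]
  have h24 : Real.sqrt 2 ^ 4 = 4 := by
    rw [show (4:ℕ) = 2*2 from rfl, pow_mul, Real.sq_sqrt (by norm_num : (0:ℝ) ≤ 2)]
    norm_num
  have h2 : ((2:ℝ) * (Real.sqrt π * Real.sqrt 2)) ^ 4 = 64 * π ^ 2 := by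
    rw [mul_pow, mul_pow, hp4, h24]; ring
  have h3 : Real.exp 5 ≤ 64 * π ^ 2 := by
    have he : Real.exp 5 = (Real.exp 1) ^ 5 := by
      rw [← Real.exp_nat_mul]; norm_num
    rw [he]
    have h5 : Real.exp 1 ^ 5 ≤ (2.7182818286 : ℝ) ^ 5 :=
      pow_le_pow_left₀ (Real.exp_pos _).le Real.exp_one_lt_d9.le 5
    have h6 : ((2.7182818286 : ℝ)) ^ 5 ≤ 149 := by norm_num
    nlinarith [Real.pi_gt_three]
  have h4 : (Real.exp 1 * Real.exp (1/4)) ^ 4 ≤ ((2:ℝ) * (Real.sqrt π * Real.sqrt 2)) ^ 4 := by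
    rw [h1, h2]; exact h3
  exact le_of_pow_le_pow_left₀ (by norm_num) (by positivity) h4

lemma aux_geom (k : ℕ) (hk : 1 ≤ k) :
    Real.exp 1 * Real.exp (1/4) ^ k ≤ 2 * (Real.sqrt π * Real.sqrt 2) ^ k := by
  induction k with
  | zero => omega
  | succ j ih =>
    rcases Nat.eq_zero_or_pos j with rfl | hj
    · simpa using aux_base
    · have h := ih hj
      have hq := aux_quarter_le
      have hpos : (0:ℝ) < Real.exp (1/4) := Real.exp_pos _
      calc Real.exp 1 * Real.exp (1/4) ^ (j+1)
          = (Real.exp 1 * Real.exp (1/4) ^ j) * Real.exp (1/4) := by ring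
        _ ≤ (2 * (Real.sqrt π * Real.sqrt 2) ^ j) * (Real.sqrt π * Real.sqrt 2) := by
            apply mul_le_mul h hq hpos.le (by positivity)
        _ = 2 * (Real.sqrt π * Real.sqrt 2) ^ (j+1) := by ring
end Aux

open Finset Real in
/-- If `u` has support of size `k`, the peak of the multinomial pmf is at most
`2 / (n^{(k-1)/2} · √(∏_{i ∈ supp(u)} u_i))` for all sufficiently large `n`. -/
theorem multinomial_peak_bound (q k : ℕ) (hq : 2 ≤ q) (u : Fin q → ℝ)
    (hu0 : ∀ i, 0 ≤ u i) (hu1 : ∑ i, u i = 1)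
    (hk : (Finset.univ.filter fun i => u i ≠ 0).card = k) :
    ∃ N : ℕ, ∀ n ≥ N, ∀ t : Fin q → ℕ, (∑ i, t i) = n →
      multPMF q n u t ≤
        2 / ((n : ℝ) ^ (((k : ℝ) - 1) / 2) *
          Real.sqrt (∏ i ∈ Finset.univ.filter fun i => u i ≠ 0, u i)) := by
  classical
  set S : Finset (Fin q) := Finset.univ.filter (fun i => u i ≠ 0) with hSdef
  have hSsum : ∑ i ∈ S, u i = 1 := by
    rw [hSdef, Finset.sum_filter_ne_zero]; exact hu1
  have hS : S.Nonempty := by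
    by_contra h
    rw [Finset.not_nonempty_iff_eq_empty] at h
    rw [h, Finset.sum_empty] at hSsum; norm_num at hSsum
  have hk1 : 1 ≤ k := by rw [← hk]; exact Finset.card_pos.2 hS
  have hune : ∀ i ∈ S, u i ≠ 0 := fun i hi => by
    have := (Finset.mem_filter.1 hi).2; exact this
  have hupos : ∀ i ∈ S, 0 < u i := fun i hi => (hu0 i).lt_of_ne' (hune i hi)
  have hule : ∀ i, u i ≤ 1 := fun i => by
    rw [← hu1]
    exact Finset.single_le_sum (fun j _ => hu0 j) (Finset.mem_univ i)
  set ε : ℝ := S.inf' hS u with hεdef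
  have hεpos : 0 < ε := by
    rw [hεdef, Finset.lt_inf'_iff]
    exact fun i hi => hupos i hi
  have hεle : ∀ i ∈ S, ε ≤ u i := fun i hi => Finset.inf'_le u hi
  set P : ℝ := ∏ i ∈ S, u i with hPdef
  have hPpos : 0 < P := Finset.prod_pos hupos
  -- choose N₀ from the exponential decay
  have htend : Filter.Tendsto (fun n : ℕ => ((n:ℝ))^k * Real.exp (-(ε * n)))
      Filter.atTop (nhds 0) := by
    have t1 : Filter.Tendsto (fun n : ℕ => ε * n) Filter.atTop Filter.atTop :=
      Filter.Tendsto.const_mul_atTop hεpos tendsto_natCast_atTop_atTop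
    have t2 := (Real.tendsto_pow_mul_exp_neg_atTop_nhds_zero k).comp t1
    have t3 := t2.const_mul ((ε⁻¹)^k)
    rw [mul_zero] at t3
    refine t3.congr (fun n => ?_)
    simp only [Function.comp_apply]
    rw [mul_pow]
    field_simp
    rw [← mul_pow, one_div_mul_cancel hεpos.ne', one_pow, one_mul]
  obtain ⟨N₀, hN₀⟩ := Filter.eventually_atTop.1
    (htend.eventually (eventually_le_nhds (by norm_num : (0:ℝ) < 1/2)))
  refine ⟨max N₀ 1, fun n hn t hsum => ?_⟩
  have hn1 : 1 ≤ n := le_trans (le_max_right _ _) hn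
  have hnN₀ : N₀ ≤ n := le_trans (le_max_left _ _) hn
  have hnR1 : (1:ℝ) ≤ (n:ℝ) := by exact_mod_cast hn1
  have hnRpos : (0:ℝ) < (n:ℝ) := by linarith
  have hrpos : (0:ℝ) < (n : ℝ) ^ (((k : ℝ) - 1) / 2) := Real.rpow_pos_of_pos hnRpos _
  have hD2pos : 0 < (n : ℝ) ^ (((k : ℝ) - 1) / 2) * Real.sqrt P :=
    mul_pos hrpos (Real.sqrt_pos.2 hPpos)
  rw [multPMF, if_pos hsum]
  by_cases hz : ∀ i, u i = 0 → t i = 0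
  swap
  · push_neg at hz
    obtain ⟨i, hui, hti⟩ := hz
    have hzero : ∏ i, u i ^ t i = 0 :=
      Finset.prod_eq_zero (Finset.mem_univ i) (by rw [hui]; exact zero_pow hti)
    rw [hzero, mul_zero]
    positivity
  -- main case
  set T : Finset (Fin q) := Finset.univ.filter (fun i => t i ≠ 0) with hTdef
  have hTS : T ⊆ S := by
    intro i hi
    have hti : t i ≠ 0 := (Finset.mem_filter.1 hi).2
    rw [hSdef, Finset.mem_filter]
    exact ⟨Finset.mem_univ i, fun h => hti (hz i h)⟩
  set m : ℕ := T.card with hmdef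
  have hmk : m ≤ k := by rw [← hk]; exact Finset.card_le_card hTS
  have hsumT : ∑ i ∈ T, t i = n := by
    rw [hTdef, Finset.sum_filter_ne_zero]; exact hsum
  have ht1 : ∀ i ∈ T, 1 ≤ t i := fun i hi =>
    Nat.one_le_iff_ne_zero.2 (Finset.mem_filter.1 hi).2
  have huposT : ∀ i ∈ T, 0 < u i := fun i hi => hupos i (hTS hi)
  set Q : ℝ := ∏ i ∈ T, u i with hQdef
  have hQpos : 0 < Q := Finset.prod_pos huposT
  set R : ℝ := ∏ i ∈ S \ T, u i with hRdef
  have hPRQ : P = R * Q := by rw [hPdef, hRdef, hQdef, Finset.prod_sdiff hTS]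
  have hRpos : 0 < R := Finset.prod_pos (fun i hi => hupos i (Finset.mem_sdiff.1 hi).1)
  have hRle : R ≤ 1 := Finset.prod_le_one (fun i hi => (hupos i (Finset.mem_sdiff.1 hi).1).le)
    (fun i _ => hule i)
  set σ : ℝ := ∑ i ∈ T, u i with hσdef
  -- multinomial as a real fraction
  have hprodfacpos : (0:ℝ) < ∏ i, (Nat.factorial (t i) : ℝ) := by positivity
  have hcast : (Nat.multinomial Finset.univ t : ℝ)
      = (Nat.factorial n : ℝ) / ∏ i, (Nat.factorial (t i) : ℝ) := by
    rw [eq_div_iff hprodfacpos.ne', mul_comm]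
    rw [← hsum]
    exact_mod_cast Nat.multinomial_spec Finset.univ t
  have hprodfac : ∏ i, (Nat.factorial (t i) : ℝ) = ∏ i ∈ T, (Nat.factorial (t i) : ℝ) :=
    (Finset.prod_subset (Finset.subset_univ T) (fun i _ hi => by
      have h0 : t i = 0 := by
        by_contra h
        exact hi (by rw [hTdef]; exact Finset.mem_filter.2 ⟨Finset.mem_univ i, h⟩)
      simp [h0])).symm
  have hprodu : ∏ i, u i ^ t i = ∏ i ∈ T, u i ^ t i :=
    (Finset.prod_subset (Finset.subset_univ T) (fun i _ hi => by
      have h0 : t i = 0 := by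
        by_contra h
        exact hi (by rw [hTdef]; exact Finset.mem_filter.2 ⟨Finset.mem_univ i, h⟩)
      simp [h0])).symm
  have hexpr : (Nat.multinomial Finset.univ t : ℝ) * ∏ i, u i ^ t i
      = (Nat.factorial n : ℝ) * ∏ i ∈ T, (u i ^ t i / (Nat.factorial (t i) : ℝ)) := by
    rw [hcast, hprodfac, hprodu, Finset.prod_div_distrib]
    ring
  rw [hexpr]
  -- per-factor bound
  have claim : ∀ i ∈ T, u i ^ t i / (Nat.factorial (t i) : ℝ)
      ≤ Real.exp (1/4 + n * u i)
        / (Real.sqrt π * Real.sqrt 2 * Real.sqrt ((n:ℝ) * u i) * (n:ℝ) ^ t i) := by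
    intro i hi
    have hti := ht1 i hi
    have htiR : (0:ℝ) < (t i : ℝ) := by exact_mod_cast hti
    have hui := huposT i hi
    have ha : (0:ℝ) < (n:ℝ) * u i := by positivity
    have hfacpos : (0:ℝ) < (Nat.factorial (t i) : ℝ) := by positivity
    have hdpos : (0:ℝ) < Real.sqrt π * Real.sqrt 2 * Real.sqrt ((n:ℝ) * u i) * (n:ℝ) ^ t i := by
      positivity
    rw [div_le_div_iff₀ hfacpos hdpos]
    have het : Real.exp ((t i : ℝ)) = Real.exp 1 ^ (t i) := by
      rw [← Real.exp_nat_mul, mul_one]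
    calc u i ^ t i * (Real.sqrt π * Real.sqrt 2 * Real.sqrt ((n:ℝ) * u i) * (n:ℝ) ^ t i)
        = Real.sqrt π * Real.sqrt 2 * (((n:ℝ) * u i) ^ t i * Real.sqrt ((n:ℝ) * u i)) := by
          rw [mul_pow]; ring
      _ ≤ Real.sqrt π * Real.sqrt 2
          * (((t i):ℝ) ^ t i * Real.sqrt (t i) * Real.exp (1/4 + (n:ℝ) * u i - t i)) := by
          apply mul_le_mul_of_nonneg_left (aux_key _ _ ha hti) (by positivity)
      _ = Real.exp (1/4 + (n:ℝ) * u i)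
          * (Real.sqrt π * Real.sqrt 2 * Real.sqrt (t i) * (((t i):ℝ) / Real.exp 1) ^ t i) := by
          rw [Real.exp_sub, div_pow, ← het]
          have hne : Real.exp ((t i : ℝ)) ≠ 0 := (Real.exp_pos _).ne'
          field_simp
      _ ≤ Real.exp (1/4 + (n:ℝ) * u i) * (Nat.factorial (t i) : ℝ) :=
          mul_le_mul_of_nonneg_left (aux_fact_lower (t i)) (Real.exp_pos _).le
  -- assemble the product bound
  have hprodR : ∏ i ∈ T, (Real.exp (1/4 + n * u i)
        / (Real.sqrt π * Real.sqrt 2 * Real.sqrt ((n:ℝ) * u i) * (n:ℝ) ^ t i))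
      = Real.exp ((m:ℝ)/4 + n * σ)
        / ((Real.sqrt π * Real.sqrt 2) ^ m * Real.sqrt (n:ℝ) ^ m * Real.sqrt Q * (n:ℝ) ^ n) := by
    rw [Finset.prod_div_distrib]
    congr 1
    · rw [← Real.exp_sum, Finset.sum_add_distrib, Finset.sum_const, ← Finset.mul_sum]
      rw [hσdef, hmdef]
      congr 1
      push_cast
      ring
    · have h1 : ∀ i ∈ T, Real.sqrt π * Real.sqrt 2 * Real.sqrt ((n:ℝ) * u i) * (n:ℝ) ^ t i
          = (Real.sqrt π * Real.sqrt 2) * ((Real.sqrt (n:ℝ) * Real.sqrt (u i)) * (n:ℝ) ^ t i) := by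
        intro i hi
        rw [Real.sqrt_mul hnRpos.le]
        ring
      rw [Finset.prod_congr rfl h1, Finset.prod_mul_distrib, Finset.prod_const,
        Finset.prod_mul_distrib, Finset.prod_mul_distrib, Finset.prod_const,
        Finset.prod_pow_eq_pow_sum, hsumT,
        ← aux_sqrt_prod T u (fun i hi => (huposT i hi).le), ← hQdef, ← hmdef]
      ring
  have hbound1 : (Nat.factorial n : ℝ) * ∏ i ∈ T, (u i ^ t i / (Nat.factorial (t i) : ℝ))
      ≤ (Real.exp 1 * Real.sqrt n * ((n:ℝ) / Real.exp 1) ^ n)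
        * (Real.exp ((m:ℝ)/4 + n * σ)
          / ((Real.sqrt π * Real.sqrt 2) ^ m * Real.sqrt (n:ℝ) ^ m * Real.sqrt Q * (n:ℝ) ^ n)) := by
    rw [← hprodR]
    apply mul_le_mul (aux_fact_upper n hn1)
      (Finset.prod_le_prod (fun i hi => div_nonneg (pow_nonneg (hu0 i) _) (Nat.cast_nonneg _)) claim)
      (Finset.prod_nonneg (fun i hi => div_nonneg (pow_nonneg (hu0 i) _) (Nat.cast_nonneg _)))
      (by positivity)
  refine hbound1.trans ?_
  -- final comparison
  have hD1pos : (0:ℝ) < (Real.sqrt π * Real.sqrt 2) ^ m * Real.sqrt (n:ℝ) ^ m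
      * Real.sqrt Q * (n:ℝ) ^ n := by positivity
  rw [mul_div_assoc', div_le_div_iff₀ hD1pos hD2pos]
  -- helpful identities
  have hf1 : ((n:ℝ) / Real.exp 1) ^ n = (n:ℝ) ^ n / Real.exp (n:ℝ) := by
    rw [div_pow]
    congr 1
    rw [← Real.exp_nat_mul, mul_one]
  have hexpn : Real.exp ((n:ℝ)) ≠ 0 := (Real.exp_pos _).ne'
  have hsqP : Real.sqrt P = Real.sqrt R * Real.sqrt Q := by
    rw [hPRQ, Real.sqrt_mul hRpos.le]
  have hsqRle : Real.sqrt R ≤ 1 := by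
    rw [show (1:ℝ) = Real.sqrt 1 from (Real.sqrt_one).symm]
    exact Real.sqrt_le_sqrt hRle
  have e2 : Real.sqrt (n:ℝ) * (n:ℝ) ^ (((k:ℝ) - 1) / 2) = ((n:ℝ)) ^ ((k:ℝ) / 2) := by
    rw [Real.sqrt_eq_rpow, ← Real.rpow_add hnRpos]
    congr 1
    ring
  have e1 : Real.sqrt (n:ℝ) ^ k = ((n:ℝ)) ^ ((k:ℝ) / 2) := by
    rw [Real.sqrt_eq_rpow, ← Real.rpow_natCast ((n:ℝ) ^ ((1:ℝ)/2)) k, ← Real.rpow_mul hnRpos.le]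
    congr 1
    ring
  have hexpm : Real.exp ((m:ℝ)/4 + (n:ℝ) * σ)
      = Real.exp (1/4) ^ m * Real.exp ((n:ℝ) * σ) := by
    rw [← Real.exp_nat_mul, ← Real.exp_add]
    congr 1
    ring
  rcases eq_or_lt_of_le hmk with hmke | hlt
  · -- m = k : T = S
    have hTSeq : T = S := Finset.eq_of_subset_of_card_le hTS (by omega)
    have hσ1 : σ = 1 := by rw [hσdef, hTSeq, hSsum]
    have hQP : Q = P := by rw [hQdef, hPdef, hTSeq]
    calc Real.exp 1 * Real.sqrt (n:ℝ) * ((n:ℝ) / Real.exp 1) ^ n * Real.exp ((m:ℝ)/4 + n * σ)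
          * ((n : ℝ) ^ (((k : ℝ) - 1) / 2) * Real.sqrt P)
        = (Real.exp 1 * Real.exp (1/4) ^ m)
          * (((n:ℝ)) ^ ((k:ℝ) / 2) * ((n:ℝ) ^ n * Real.sqrt P)) := by
          rw [hexpm, hσ1, hf1, mul_one, ← e2]
          field_simp
      _ ≤ (2 * (Real.sqrt π * Real.sqrt 2) ^ m)
          * (((n:ℝ)) ^ ((k:ℝ) / 2) * ((n:ℝ) ^ n * Real.sqrt P)) := by
          apply mul_le_mul_of_nonneg_right ?_ (by positivity)
          rw [hmke]
          exact aux_geom k hk1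
      _ = 2 * ((Real.sqrt π * Real.sqrt 2) ^ m * Real.sqrt (n:ℝ) ^ m * Real.sqrt Q * (n:ℝ) ^ n) := by
          rw [hQP, hmke, e1]
          ring
  · -- m < k
    have hss : T ⊂ S := Finset.ssubset_iff_subset_ne.2 ⟨hTS, by
      intro h
      have hmkeq : m = k := by rw [hmdef, h]; exact hk
      omega⟩
    obtain ⟨j, hjS, hjT⟩ := Finset.exists_of_ssubset hss
    have hsd : ∑ i ∈ S \ T, u i + σ = 1 := by
      rw [hσdef, Finset.sum_sdiff hTS]; exact hSsum
    have hjd : ε ≤ ∑ i ∈ S \ T, u i :=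
      le_trans (hεle j hjS) (Finset.single_le_sum
        (fun i hi => (hupos i (Finset.mem_sdiff.1 hi).1).le) (Finset.mem_sdiff.2 ⟨hjS, hjT⟩))
    have hσε : σ ≤ 1 - ε := by linarith
    have hexpineq : (n:ℝ) * σ - n ≤ -(ε * n) := by
      have h2 : (n:ℝ) * σ ≤ (n:ℝ) * (1 - ε) := mul_le_mul_of_nonneg_left hσε hnRpos.le
      have h3 : (n:ℝ) * (1 - ε) = n - ε * n := by ring
      linarith
    have hquarter_pow : Real.exp (1/4) ^ m ≤ (Real.sqrt π * Real.sqrt 2) ^ m :=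
      pow_le_pow_left₀ (Real.exp_pos _).le aux_quarter_le m
    have hsq1 : (1:ℝ) ≤ Real.sqrt (n:ℝ) := by
      rw [show (1:ℝ) = Real.sqrt 1 from (Real.sqrt_one).symm]
      exact Real.sqrt_le_sqrt hnR1
    have hsqm1 : (1:ℝ) ≤ Real.sqrt (n:ℝ) ^ m := one_le_pow₀ hsq1
    have hnk2 : ((n:ℝ)) ^ ((k:ℝ)/2) ≤ (n:ℝ) ^ k := by
      rw [← Real.rpow_natCast (n:ℝ) k]
      apply Real.rpow_le_rpow_of_exponent_le hnR1
      have : (0:ℝ) ≤ (k:ℝ) := Nat.cast_nonneg k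
      linarith
    have hNn : (n:ℝ) ^ k * Real.exp (-(ε * n)) ≤ 1/2 := hN₀ n hnN₀
    calc Real.exp 1 * Real.sqrt (n:ℝ) * ((n:ℝ) / Real.exp 1) ^ n * Real.exp ((m:ℝ)/4 + n * σ)
          * ((n : ℝ) ^ (((k : ℝ) - 1) / 2) * Real.sqrt P)
        = (Real.exp 1 * (Real.exp (1/4) ^ m
            * (((n:ℝ)) ^ ((k:ℝ)/2) * Real.exp ((n:ℝ) * σ - n))))
          * (Real.sqrt R * Real.sqrt Q * (n:ℝ) ^ n) := by
          rw [hexpm, hf1, hsqP, ← e2, Real.exp_sub]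
          field_simp
      _ ≤ (Real.exp 1 * ((Real.sqrt π * Real.sqrt 2) ^ m
            * (((n:ℝ)) ^ k * Real.exp (-(ε * n)))))
          * (1 * Real.sqrt Q * (n:ℝ) ^ n) := by
          gcongr
      _ = (Real.exp 1 * ((n:ℝ) ^ k * Real.exp (-(ε * n))))
          * ((Real.sqrt π * Real.sqrt 2) ^ m * Real.sqrt Q * (n:ℝ) ^ n) := by ring
      _ ≤ (Real.exp 1 * (1/2))
          * ((Real.sqrt π * Real.sqrt 2) ^ m * Real.sqrt Q * (n:ℝ) ^ n) := by
          apply mul_le_mul_of_nonneg_right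
            (mul_le_mul_of_nonneg_left hNn (Real.exp_pos _).le) (by positivity)
      _ ≤ 2 * ((Real.sqrt π * Real.sqrt 2) ^ m * Real.sqrt Q * (n:ℝ) ^ n) := by
          apply mul_le_mul_of_nonneg_right ?_ (by positivity)
          have h9 := Real.exp_one_lt_d9
          nlinarith
      _ = 2 * ((Real.sqrt π * Real.sqrt 2) ^ m * 1 * Real.sqrt Q * (n:ℝ) ^ n) := by ring
      _ ≤ 2 * ((Real.sqrt π * Real.sqrt 2) ^ m * Real.sqrt (n:ℝ) ^ m * Real.sqrt Q * (n:ℝ) ^ n) := by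
          gcongr
end

section
/- Let n, q ≥ 2, 1 ≤ a ≤ n, and ν = ceil((n+1)/a). For l in [1:ν]^{q-1}, define the cell C_l as the set of compositions t of n into q parts with (l_i - 1)a ≤ t_i ≤ l_i·a - 1 for each i in [1:q-1]. Then C_l is nonempty if and only if q - 1 ≤ sum_{i=1}^{q-1} l_i ≤ n/a + (q-1). -/
/-!
The last coordinate of a composition is free, so a point of `C_l` exists exactly when the lower
corner `((l_i - 1) a)_i` of the cell fits, i.e. when `∑ (l_i - 1) a ≤ n`; dividing by `a` gives the
upper inequality, and the lower one holds because every `l_i ≥ 1`.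
-/

open Finset

theorem exists_sum_eq_of_castSucc_bounds_iff {k n : ℕ} (lo hi : Fin k → ℕ)
    (hlohi : ∀ i, lo i ≤ hi i) :
    (∃ t : Fin (k + 1) → ℕ, ∑ i, t i = n ∧ ∀ i, lo i ≤ t i.castSucc ∧ t i.castSucc ≤ hi i) ↔
      ∑ i, lo i ≤ n := by
  constructor
  · rintro ⟨t, rfl, ht⟩
    calc ∑ i, lo i ≤ ∑ i, t i.castSucc := sum_le_sum fun i _ => (ht i).1
      _ ≤ ∑ i, t i := by rw [Fin.sum_univ_castSucc]; exact le_self_add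
  · intro h
    refine ⟨Fin.snoc lo (n - ∑ i, lo i), ?_, fun i => ?_⟩
    · simp [Fin.sum_univ_castSucc, h]
    · simp [hlohi i]

theorem sum_sub_one_mul_le_iff {ι : Type*} [Fintype ι] {a n : ℕ} (ha : 0 < a) (l : ι → ℕ)
    (hl : ∀ i, 1 ≤ l i) :
    ∑ i, (l i - 1) * a ≤ n ↔ ∑ i, (l i : ℝ) ≤ n / a + Fintype.card ι := by
  rw [← Nat.cast_le (α := ℝ), ← sub_le_iff_le_add, le_div_iff₀ (by exact_mod_cast ha)]
  push_cast [Nat.cast_sub (hl _), ← sum_mul, sum_sub_distrib]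
  simp

theorem cell_nonempty_iff_general (n q a : ℕ) (hq : 2 ≤ q) (ha : 1 ≤ a)
    (l : Fin (q - 1) → ℕ) (hl : ∀ i, 1 ≤ l i ∧ l i ≤ (n + a) / a) :
    (∃ t : Fin q → ℕ, (∑ i, t i) = n ∧
        ∀ i : Fin (q - 1),
          (l i - 1) * a ≤ t (Fin.castLE (Nat.sub_le q 1) i) ∧
          t (Fin.castLE (Nat.sub_le q 1) i) ≤ l i * a - 1) ↔
      ((q : ℝ) - 1 ≤ ∑ i, (l i : ℝ) ∧
        (∑ i, (l i : ℝ)) ≤ (n : ℝ) / (a : ℝ) + ((q : ℝ) - 1)) := by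
  obtain ⟨k, rfl⟩ : ∃ k, q = k + 1 := ⟨q - 1, by omega⟩
  have hbounds : ∀ i, (l i - 1) * a ≤ l i * a - 1 := fun i => by
    rw [Nat.sub_one_mul]; exact Nat.sub_le_sub_left ha _
  have hcard : (Fintype.card (Fin (k + 1 - 1)) : ℝ) = (k + 1 : ℕ) - 1 := by simp
  have hlower : (Fintype.card (Fin (k + 1 - 1)) : ℝ) ≤ ∑ i, (l i : ℝ) := by
    simpa using card_nsmul_le_sum univ (fun i => (l i : ℝ)) 1 fun i _ => by
      exact_mod_cast (hl i).1
  rw [← hcard, ← sum_sub_one_mul_le_iff ha l fun i => (hl i).1, and_iff_right hlower]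
  exact exists_sum_eq_of_castSucc_bounds_iff (k := k) _ _ hbounds

/-- A cubic cell `C_l` (indexed by `l ∈ [1:⌈(n+1)/a⌉]^{q-1}`) of the set of compositions
of `n` into `q` parts is nonempty if and only if `q-1 ≤ ∑ l_i ≤ n/a + (q-1)`. -/
theorem cell_nonempty_iff (n q a : ℕ) (hq : 2 ≤ q) (ha : 1 ≤ a) (han : a ≤ n)
    (l : Fin (q - 1) → ℕ) (hl : ∀ i, 1 ≤ l i ∧ l i ≤ (n + a) / a) :
    (∃ t : Fin q → ℕ, (∑ i, t i) = n ∧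
        ∀ i : Fin (q - 1),
          (l i - 1) * a ≤ t (Fin.castLE (Nat.sub_le q 1) i) ∧
          t (Fin.castLE (Nat.sub_le q 1) i) ≤ l i * a - 1) ↔
      ((q : ℝ) - 1 ≤ ∑ i, (l i : ℝ) ∧
        (∑ i, (l i : ℝ)) ≤ (n : ℝ) / (a : ℝ) + ((q : ℝ) - 1)) :=
  cell_nonempty_iff_general n q a hq ha l hl
end

section
/- Let n, q ≥ 2 and 1 ≤ a ≤ n, with cells C_l indexed by l in [1:ceil((n+1)/a)]^{q-1} as in the cubic-cell partition of compositions of n. If l and l' are adjacent (|sum_i (l_i - l_i')| ≤ 1 and sum_i |l_i - l_i'| ≤ 2), then for any compositions t in C_l and t' in C_{l'}, the half-l1 distance satisfies d_c(t,t') = (1/2) sum_{i=1}^q |t_i - t_i'| ≤ (a/2)(2q+1). -/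
/-- If two cell indices `l, l'` of the cubic-cell partition of compositions of `n` into
`q` parts are adjacent, then any compositions `t ∈ C_l` and `t' ∈ C_{l'}` satisfy
`d_c(t,t') = (1/2)∑|t_i - t_i'| ≤ (a/2)(2q+1)`. -/
theorem adjacent_cells_distance (n q a : ℕ) (hq : 2 ≤ q) (ha : 1 ≤ a) (han : a ≤ n)
    (l l' : Fin (q - 1) → ℕ)
    (hl : ∀ i, 1 ≤ l i ∧ l i ≤ (n + a) / a)
    (hl' : ∀ i, 1 ≤ l' i ∧ l' i ≤ (n + a) / a)
    (hlsum : (∑ i, (l i : ℝ)) ≤ (n : ℝ) / (a : ℝ) + ((q : ℝ) - 1))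
    (hl'sum : (∑ i, (l' i : ℝ)) ≤ (n : ℝ) / (a : ℝ) + ((q : ℝ) - 1))
    (hadj1 : |∑ i, ((l i : ℤ) - (l' i : ℤ))| ≤ 1)
    (hadj2 : (∑ i, |(l i : ℤ) - (l' i : ℤ)|) ≤ 2)
    (t t' : Fin q → ℕ) (ht : (∑ i, t i) = n) (ht' : (∑ i, t' i) = n)
    (htC : ∀ i : Fin (q - 1),
      (l i - 1) * a ≤ t (Fin.castLE (Nat.sub_le q 1) i) ∧
      t (Fin.castLE (Nat.sub_le q 1) i) ≤ l i * a - 1)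
    (ht'C : ∀ i : Fin (q - 1),
      (l' i - 1) * a ≤ t' (Fin.castLE (Nat.sub_le q 1) i) ∧
      t' (Fin.castLE (Nat.sub_le q 1) i) ≤ l' i * a - 1) :
    (1 / 2 : ℝ) * ∑ i, |(t i : ℝ) - (t' i : ℝ)| ≤ ((a : ℝ) / 2) * (2 * (q : ℝ) + 1) := by
  obtain ⟨m, rfl⟩ : ∃ m, q = m + 2 := ⟨q - 2, by omega⟩
  clear hq han hlsum hl'sum
  have ha' : (1:ℤ) ≤ a := by exact_mod_cast ha
  set c : Fin ((m+2) - 1) → Fin (m+2) := Fin.castLE (Nat.sub_le (m+2) 1) with hc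
  -- per-coordinate interval bounds over ℤ
  have bnd : ∀ (u u' : Fin (m+2) → ℕ) (v v' : Fin ((m+2)-1) → ℕ),
      (∀ i, 1 ≤ v i) → (∀ i, 1 ≤ v' i) →
      (∀ i : Fin ((m+2)-1), (v i - 1) * a ≤ u (c i) ∧ u (c i) ≤ v i * a - 1) →
      (∀ i : Fin ((m+2)-1), (v' i - 1) * a ≤ u' (c i) ∧ u' (c i) ≤ v' i * a - 1) →
      ∀ i : Fin ((m+2)-1),
      (u (c i) : ℤ) - u' (c i) ≤ ((v i : ℤ) - v' i) * a + (a - 1) := by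
    intro u u' v v' hv hv' hu hu' i
    have hP : 1 ≤ v i * a := Nat.one_le_iff_ne_zero.mpr
      (Nat.mul_ne_zero (by have := hv i; omega) (by omega))
    have e1 : (u (c i) : ℤ) ≤ (v i : ℤ) * a - 1 := by
      have h := (hu i).2
      zify [hP] at h
      exact h
    have e2 : ((v' i : ℤ) - 1) * a ≤ (u' (c i) : ℤ) := by
      have h := (hu' i).1
      zify [hv' i] at h
      exact h
    nlinarith [e1, e2]
  have hv : ∀ i, 1 ≤ l i := fun i => (hl i).1
  have hv' : ∀ i, 1 ≤ l' i := fun i => (hl' i).1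
  have key1 := bnd t t' l l' hv hv' htC ht'C
  have key2 := bnd t' t l' l hv' hv ht'C htC
  -- absolute per-coordinate bound
  have keyabs : ∀ i : Fin ((m+2)-1),
      |(t (c i) : ℤ) - t' (c i)| ≤ |(l i : ℤ) - l' i| * a + (a - 1) := by
    intro i
    rw [abs_le]
    constructor
    · have h := key2 i
      nlinarith [le_abs_self ((l' i : ℤ) - l i), abs_sub_comm ((l i : ℤ)) ((l' i : ℤ)), h]
    · have h := key1 i
      nlinarith [le_abs_self ((l i : ℤ) - l' i), h]
  -- sums over first q-1 coordinates
  have sumabs : ∑ i : Fin ((m+2)-1), |(t (c i) : ℤ) - t' (c i)|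
      ≤ 2 * a + ((m:ℤ) + 1) * (a - 1) := by
    calc ∑ i : Fin ((m+2)-1), |(t (c i) : ℤ) - t' (c i)|
        ≤ ∑ i : Fin ((m+2)-1), (|(l i : ℤ) - l' i| * a + (a - 1)) :=
          Finset.sum_le_sum fun i _ => keyabs i
      _ = (∑ i, |(l i : ℤ) - l' i|) * a + ((m:ℤ) + 1) * (a - 1) := by
          rw [Finset.sum_add_distrib, ← Finset.sum_mul, Finset.sum_const,
            Finset.card_univ]
          simp [Fintype.card_fin]
      _ ≤ 2 * a + ((m:ℤ) + 1) * (a - 1) := by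
          have := mul_le_mul_of_nonneg_right hadj2 (by positivity : (0:ℤ) ≤ a)
          linarith
  -- signed sum bounds
  have hadj1' : ∑ i, ((l i : ℤ) - l' i) ≤ 1 := le_trans (le_abs_self _) hadj1
  have hadj1'' : ∑ i, ((l' i : ℤ) - l i) ≤ 1 := by
    have : ∑ i, ((l' i : ℤ) - l i) = -∑ i, ((l i : ℤ) - l' i) := by
      rw [← Finset.sum_neg_distrib]; congr 1; funext i; ring
    rw [this]
    linarith [neg_abs_le (∑ i, ((l i : ℤ) - l' i)), hadj1]
  have signed : ∀ (u u' : Fin (m+2) → ℕ),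
      (∀ i : Fin ((m+2)-1), (u (c i) : ℤ) - u' (c i) ≤ ((l i : ℤ) - l' i) * a + (a-1)) →
      (∑ i, ((l i : ℤ) - l' i)) ≤ 1 →
      ∑ i : Fin ((m+2)-1), ((u (c i) : ℤ) - u' (c i)) ≤ a + ((m:ℤ)+1) * (a-1) := by
    intro u u' hk hs
    calc ∑ i : Fin ((m+2)-1), ((u (c i) : ℤ) - u' (c i))
        ≤ ∑ i : Fin ((m+2)-1), (((l i : ℤ) - l' i) * a + (a-1)) :=
          Finset.sum_le_sum fun i _ => hk i
      _ = (∑ i, ((l i : ℤ) - l' i)) * a + ((m:ℤ)+1) * (a-1) := by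
          rw [Finset.sum_add_distrib, ← Finset.sum_mul, Finset.sum_const,
            Finset.card_univ]
          simp [Fintype.card_fin]
      _ ≤ a + ((m:ℤ)+1) * (a-1) := by
          have := mul_le_mul_of_nonneg_right hs (by positivity : (0:ℤ) ≤ a)
          linarith
  have s1 := signed t t' key1 hadj1'
  have s2' : ∀ i : Fin ((m+2)-1), (t' (c i) : ℤ) - t (c i) ≤ ((l i : ℤ) - l' i) * a + (a-1) →
      True := fun _ _ => trivial
  have s2 : ∑ i : Fin ((m+2)-1), ((t' (c i) : ℤ) - t (c i)) ≤ a + ((m:ℤ)+1) * (a-1) := by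
    calc ∑ i : Fin ((m+2)-1), ((t' (c i) : ℤ) - t (c i))
        ≤ ∑ i : Fin ((m+2)-1), (((l' i : ℤ) - l i) * a + (a-1)) :=
          Finset.sum_le_sum fun i _ => key2 i
      _ = (∑ i, ((l' i : ℤ) - l i)) * a + ((m:ℤ)+1) * (a-1) := by
          rw [Finset.sum_add_distrib, ← Finset.sum_mul, Finset.sum_const,
            Finset.card_univ]
          simp [Fintype.card_fin]
      _ ≤ a + ((m:ℤ)+1) * (a-1) := by
          have := mul_le_mul_of_nonneg_right hadj1'' (by positivity : (0:ℤ) ≤ a)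
          linarith
  -- split sums over Fin (m+2)
  have hsplit : ∀ g : Fin (m+2) → ℤ,
      ∑ i, g i = (∑ i : Fin ((m+2)-1), g (c i)) + g (Fin.last (m+1)) := by
    intro g
    rw [Fin.sum_univ_castSucc]
    rfl
  have htz : ∑ i, (t i : ℤ) = n := by exact_mod_cast ht
  have ht'z : ∑ i, (t' i : ℤ) = n := by exact_mod_cast ht'
  have hlast : (t (Fin.last (m+1)) : ℤ) - t' (Fin.last (m+1))
      = ∑ i : Fin ((m+2)-1), ((t' (c i) : ℤ) - t (c i)) := by
    have h1 := hsplit (fun i => (t i : ℤ))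
    have h2 := hsplit (fun i => (t' i : ℤ))
    rw [Finset.sum_sub_distrib]
    rw [h1] at htz
    rw [h2] at ht'z
    linarith
  have hlastabs : |(t (Fin.last (m+1)) : ℤ) - t' (Fin.last (m+1))|
      ≤ a + ((m:ℤ)+1) * (a-1) := by
    rw [abs_le]
    constructor
    · rw [hlast]
      have : -∑ i : Fin ((m+2)-1), ((t' (c i) : ℤ) - t (c i))
          = ∑ i : Fin ((m+2)-1), ((t (c i) : ℤ) - t' (c i)) := by
        rw [← Finset.sum_neg_distrib]; congr 1; funext i; ring
      linarith [s1, this.symm ▸ (neg_le_neg s1)]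
    · rw [hlast]; exact s2
  -- second bullet fix: need -(a + (m+1)(a-1)) ≤ last diff
  have total : ∑ i : Fin (m+2), |(t i : ℤ) - t' i| ≤ (a:ℤ) * (2 * (m+2) + 1) := by
    have hs := hsplit (fun i => |(t i : ℤ) - t' i|)
    rw [hs]
    have hm : (0:ℤ) ≤ (m:ℤ) + 1 := by positivity
    nlinarith [sumabs, hlastabs, hm, ha']
  have totalR : ∑ i : Fin (m+2), |(t i : ℝ) - t' i| ≤ (a:ℝ) * (2 * ((m:ℝ)+2) + 1) := by
    have : ((∑ i : Fin (m+2), |(t i : ℤ) - t' i| : ℤ) : ℝ)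
        ≤ (((a:ℤ) * (2 * (m+2) + 1) : ℤ) : ℝ) := by exact_mod_cast total
    push_cast at this
    convert this using 2 <;> push_cast <;> ring
  push_cast
  linarith [totalR]
end

section
/- For q ≥ 2, n ≥ 3, and any subset A of the set of compositions of n into q nonnegative parts with |A| ≥ 3^{q-1}, there exist two distinct compositions t, t' in A with d_c(t,t') = (1/2) sum_{i=1}^q |t_i - t_i'| ≤ 2(q-1)·n / |A|^{1/(q-1)}. -/
theorem aux_div (L a b : ℕ) (hL : 0 < L) (h : a / L = b / L) : a < b + L := by
  have ha := Nat.div_add_mod a L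
  have hb := Nat.div_add_mod b L
  have hm := Nat.mod_lt a hL
  have : L * (a / L) = L * (b / L) := by rw [h]
  omega

/-- Packing bound: any family `A` of at least `3^{q-1}` compositions of `n` into `q`
nonnegative parts (with `n ≥ 3`) contains two distinct compositions at half-`l1`
distance at most `2(q-1)n / |A|^{1/(q-1)}`. -/
theorem packing_min_distance (q n : ℕ) (hq : 2 ≤ q) (hn : 3 ≤ n)
    (A : Finset (Fin q → ℕ)) (hA : ∀ t ∈ A, (∑ i, t i) = n)
    (hcard : 3 ^ (q - 1) ≤ A.card) :
    ∃ t ∈ A, ∃ t' ∈ A, t ≠ t' ∧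
      (1 / 2 : ℝ) * ∑ i, |(t i : ℝ) - (t' i : ℝ)| ≤
        2 * ((q : ℝ) - 1) * (n : ℝ) / (A.card : ℝ) ^ ((1 : ℝ) / ((q : ℝ) - 1)) := by
  obtain ⟨r, rfl⟩ : ∃ r, q = r + 1 := ⟨q - 1, by omega⟩
  have hr : 1 ≤ r := by omega
  have hrR : ((r + 1 : ℕ) : ℝ) - 1 = (r : ℝ) := by push_cast; ring
  rw [hrR]
  have hsub : r + 1 - 1 = r := by omega
  rw [hsub] at hcard
  -- basic positivity
  have hAcard_pos : 0 < A.card := lt_of_lt_of_le (by positivity) hcard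
  set s : ℝ := (A.card : ℝ) ^ ((1 : ℝ) / (r : ℝ)) with hs_def
  have hrR0 : (0 : ℝ) < (r : ℝ) := by exact_mod_cast hr
  have hs_pos : 0 < s := Real.rpow_pos_of_pos (by exact_mod_cast hAcard_pos) _
  have hs3 : (3 : ℝ) ≤ s := by
    have h1 : ((3 : ℝ) ^ r) ^ ((1 : ℝ) / (r : ℝ)) ≤ s := by
      apply Real.rpow_le_rpow (by positivity) _ (by positivity)
      exact_mod_cast hcard
    calc (3 : ℝ) = ((3 : ℝ) ^ r) ^ ((1 : ℝ) / (r : ℝ)) := by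
          rw [← Real.rpow_natCast (3 : ℝ) r, ← Real.rpow_mul (by norm_num)]
          rw [mul_one_div, div_self (ne_of_gt hrR0), Real.rpow_one]
      _ ≤ s := h1
  have hs_pow : s ^ (r : ℕ) = (A.card : ℝ) := by
    rw [hs_def, ← Real.rpow_natCast ((A.card : ℝ) ^ ((1 : ℝ) / (r : ℝ))) r,
      ← Real.rpow_mul (by positivity), one_div, inv_mul_cancel₀ (ne_of_gt hrR0),
      Real.rpow_one]
  -- cell side length
  set L : ℕ := ⌊2 * (n : ℝ) / s⌋₊ + 1 with hL_def
  have hL_pos : 0 < L := Nat.succ_pos _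
  have hLgt : 2 * (n : ℝ) / s < L := by
    have := Nat.lt_floor_add_one (2 * (n : ℝ) / s)
    push_cast [hL_def]
    linarith
  have hLm1 : ((L : ℝ) - 1) ≤ 2 * (n : ℝ) / s := by
    have := Nat.floor_le (a := 2 * (n : ℝ) / s) (by positivity)
    push_cast [hL_def]
    linarith
  -- number of cells per axis
  set k : ℕ := n / L + 1 with hk_def
  have hn_pos : (0 : ℝ) < n := by exact_mod_cast lt_of_lt_of_le (by norm_num) hn
  have hk_lt_s : (k : ℝ) < s := by
    have h1 : ((n / L : ℕ) : ℝ) ≤ (n : ℝ) / (L : ℝ) := Nat.cast_div_le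
    have h2 : (n : ℝ) / (L : ℝ) < s / 2 := by
      have hc_pos : (0 : ℝ) < 2 * (n : ℝ) / s := by positivity
      have := div_lt_div_of_pos_left hn_pos hc_pos hLgt
      calc (n : ℝ) / L < (n : ℝ) / (2 * n / s) := this
        _ = s / 2 := by field_simp
    have h3 : (k : ℝ) = ((n / L : ℕ) : ℝ) + 1 := by rw [hk_def]; push_cast; ring
    linarith
  have hcard_lt : k ^ r < A.card := by
    have h1 : ((k : ℝ)) ^ r < s ^ r :=
      pow_lt_pow_left₀ hk_lt_s (by positivity) (by omega)
    rw [hs_pow] at h1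
    exact_mod_cast h1
  -- every coordinate is at most n
  have hcoord : ∀ t ∈ A, ∀ j : Fin (r + 1), t j ≤ n := by
    intro t ht j
    rw [← hA t ht]
    exact Finset.single_le_sum (f := t) (fun i _ => Nat.zero_le _) (Finset.mem_univ j)
  -- pigeonhole map
  set f : (Fin (r + 1) → ℕ) → (Fin r → Fin k) := fun t i =>
    ⟨min (t i.castSucc / L) (n / L), by omega⟩ with hf_def
  obtain ⟨t, ht, t', ht', htne, hfeq⟩ :=
    Finset.exists_ne_map_eq_of_card_lt_of_maps_to
      (t := (Finset.univ : Finset (Fin r → Fin k)))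
      (by simpa using hcard_lt) (fun a _ => Finset.mem_univ (f a))
  refine ⟨t, ht, t', ht', htne, ?_⟩
  -- equal cell indices give equal divisions
  have hdiv : ∀ i : Fin r, t i.castSucc / L = t' i.castSucc / L := by
    intro i
    have h1 : t i.castSucc / L ≤ n / L :=
      Nat.div_le_div_right (hcoord t ht i.castSucc)
    have h2 : t' i.castSucc / L ≤ n / L :=
      Nat.div_le_div_right (hcoord t' ht' i.castSucc)
    have := congrFun hfeq i
    simp only [hf_def, Fin.mk.injEq, min_eq_left h1, min_eq_left h2] at this
    exact this
  -- coordinate-wise bound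
  have hbound : ∀ i : Fin r, |(t i.castSucc : ℝ) - (t' i.castSucc : ℝ)| ≤ 2 * n / s := by
    intro i
    have h1 := aux_div L _ _ hL_pos (hdiv i)
    have h2 := aux_div L _ _ hL_pos (hdiv i).symm
    have h1' : t i.castSucc ≤ t' i.castSucc + (L - 1) := by omega
    have h2' : t' i.castSucc ≤ t i.castSucc + (L - 1) := by omega
    have habs : |(t i.castSucc : ℝ) - (t' i.castSucc : ℝ)| ≤ ((L - 1 : ℕ) : ℝ) := by
      rw [abs_le]
      constructor
      · have : (t' i.castSucc : ℝ) ≤ (t i.castSucc : ℝ) + ((L - 1 : ℕ) : ℝ) := by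
          exact_mod_cast h2'
        linarith
      · have : (t i.castSucc : ℝ) ≤ (t' i.castSucc : ℝ) + ((L - 1 : ℕ) : ℝ) := by
          exact_mod_cast h1'
        linarith
    have hcast : ((L - 1 : ℕ) : ℝ) = (L : ℝ) - 1 := by
      have : 1 ≤ L := hL_pos
      push_cast [this]
      ring
    rw [hcast] at habs
    linarith
  -- sum over last coordinate
  have hsum_zero : ∑ j : Fin (r + 1), ((t j : ℝ) - (t' j : ℝ)) = 0 := by
    rw [Finset.sum_sub_distrib]
    have h1 : ∑ j : Fin (r + 1), (t j : ℝ) = n := by exact_mod_cast hA t ht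
    have h2 : ∑ j : Fin (r + 1), (t' j : ℝ) = n := by exact_mod_cast hA t' ht'
    rw [h1, h2, sub_self]
  rw [Fin.sum_univ_castSucc] at hsum_zero
  have hlast : |(t (Fin.last r) : ℝ) - (t' (Fin.last r) : ℝ)| ≤
      ∑ i : Fin r, |(t i.castSucc : ℝ) - (t' i.castSucc : ℝ)| := by
    have : (t (Fin.last r) : ℝ) - (t' (Fin.last r) : ℝ) =
        -∑ i : Fin r, ((t i.castSucc : ℝ) - (t' i.castSucc : ℝ)) := by linarith
    rw [this, abs_neg]
    exact Finset.abs_sum_le_sum_abs _ _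
  have hS : ∑ i : Fin r, |(t i.castSucc : ℝ) - (t' i.castSucc : ℝ)| ≤ r * (2 * n / s) := by
    calc ∑ i : Fin r, |(t i.castSucc : ℝ) - (t' i.castSucc : ℝ)|
        ≤ ∑ _i : Fin r, (2 * (n : ℝ) / s) := Finset.sum_le_sum (fun i _ => hbound i)
      _ = r * (2 * n / s) := by rw [Finset.sum_const]; simp [mul_comm]
  rw [Fin.sum_univ_castSucc]
  calc (1 / 2 : ℝ) * (∑ i : Fin r, |(t i.castSucc : ℝ) - (t' i.castSucc : ℝ)|
        + |(t (Fin.last r) : ℝ) - (t' (Fin.last r) : ℝ)|)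
      ≤ ∑ i : Fin r, |(t i.castSucc : ℝ) - (t' i.castSucc : ℝ)| := by linarith
    _ ≤ r * (2 * n / s) := hS
    _ = 2 * (r : ℝ) * n / s := by ring
end

section
/- Under the sequential rounding quantization of a distribution Q_ip on {0,...,n} into an M-type distribution Q̂_ip (rounding masses down to multiples of 1/M in increasing order of weight and carrying residuals forward), if the channel W : {0,...,n} → P(B) satisfies d_TV(W_t, W_{t+1}) ≤ C/sqrt(n) for all t, then the output distributions satisfy d_TV(Q_op, Q̂_op) ≤ C·sqrt(n)/M, where Q_op and Q̂_op are the output distributions induced by Q_ip and Q̂_ip respectively. -/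
/-- The running (carry-augmented) masses of the sequential rounding algorithm. -/
noncomputable def Qtilde (M : ℕ) (Q : ℕ → ℝ) : ℕ → ℝ
  | 0 => Q 0
  | i + 1 => Q (i + 1) + (Qtilde M Q i - (⌊(M : ℝ) * Qtilde M Q i⌋ : ℝ) / M)

/-- The quantized masses: `Q̂(i) = ⌊M·Q̃(i)⌋/M` for `i < n` and `Q̂(n) = Q̃(n)`. -/
noncomputable def Qhat (M n : ℕ) (Q : ℕ → ℝ) (i : ℕ) : ℝ :=
  if i < n then (⌊(M : ℝ) * Qtilde M Q i⌋ : ℝ) / M else Qtilde M Q n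

/-- Key telescoping identity for the sequential rounding algorithm. -/
lemma qtilde_key (M : ℕ) (Q : ℕ → ℝ) (v : ℕ → ℝ) (k : ℕ) :
    ∑ i ∈ Finset.range (k + 1), Q i * v i
      = (∑ i ∈ Finset.range k, (⌊(M : ℝ) * Qtilde M Q i⌋ : ℝ) / M * v i)
        + Qtilde M Q k * v k
        + ∑ i ∈ Finset.range k,
            (Qtilde M Q i - (⌊(M : ℝ) * Qtilde M Q i⌋ : ℝ) / M) * (v i - v (i + 1)) := by
  induction k with
  | zero => simp [Qtilde]
  | succ k ih =>
    rw [Finset.sum_range_succ, ih, Finset.sum_range_succ, Finset.sum_range_succ,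
      show Qtilde M Q (k + 1) = Q (k + 1) +
        (Qtilde M Q k - (⌊(M : ℝ) * Qtilde M Q k⌋ : ℝ) / M) from rfl]
    ring

/-- If consecutive input points of a channel `W` have output distributions within
`C/√n` in total variation, then quantizing the input distribution by sequential rounding
changes the output distribution by at most `C·√n/M` in total variation. -/
theorem quantization_output_tv (n M : ℕ) (hn : 1 ≤ n) (hM : 2 ≤ M) (Q : ℕ → ℝ)
    (hQ0 : ∀ i ≤ n, 0 ≤ Q i) (hQ1 : ∑ i ∈ Finset.range (n + 1), Q i = 1)
    (B : Type*) [Fintype B] (W : ℕ → B → ℝ)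
    (hW0 : ∀ t b, 0 ≤ W t b) (hW1 : ∀ t, ∑ b, W t b = 1)
    (C : ℝ) (hC : 0 ≤ C)
    (hWlip : ∀ t < n, (1 / 2) * ∑ b, |W t b - W (t + 1) b| ≤ C / Real.sqrt n) :
    (1 / 2) * ∑ b, |(∑ i ∈ Finset.range (n + 1), Q i * W i b) -
        (∑ i ∈ Finset.range (n + 1), Qhat M n Q i * W i b)| ≤
      C * Real.sqrt n / M := by
  have hMpos : (0 : ℝ) < M := by
    have : (2 : ℝ) ≤ M := by exact_mod_cast hM
    linarith
  set r : ℕ → ℝ := fun i => Qtilde M Q i - (⌊(M : ℝ) * Qtilde M Q i⌋ : ℝ) / M with hrdef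
  have hr0 : ∀ i, 0 ≤ r i := by
    intro i
    have h := Int.floor_le ((M : ℝ) * Qtilde M Q i)
    have : (⌊(M : ℝ) * Qtilde M Q i⌋ : ℝ) / M ≤ Qtilde M Q i := by
      rw [div_le_iff₀ hMpos]; linarith [h]
    simp only [hrdef]; linarith
  have hr1 : ∀ i, r i ≤ 1 / M := by
    intro i
    have h := Int.lt_floor_add_one ((M : ℝ) * Qtilde M Q i)
    simp only [hrdef]
    rw [sub_le_iff_le_add, ← add_div, le_div_iff₀ hMpos]
    linarith
  -- rewrite Qhat sum
  have hhat : ∀ b, ∑ i ∈ Finset.range (n + 1), Qhat M n Q i * W i b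
      = (∑ i ∈ Finset.range n, (⌊(M : ℝ) * Qtilde M Q i⌋ : ℝ) / M * W i b)
        + Qtilde M Q n * W n b := by
    intro b
    rw [Finset.sum_range_succ]
    congr 1
    · refine Finset.sum_congr rfl fun i hi => ?_
      rw [Finset.mem_range] at hi
      simp [Qhat, hi]
    · simp [Qhat]
  have hdiff : ∀ b, (∑ i ∈ Finset.range (n + 1), Q i * W i b) -
      (∑ i ∈ Finset.range (n + 1), Qhat M n Q i * W i b)
      = ∑ i ∈ Finset.range n, r i * (W i b - W (i + 1) b) := by
    intro b
    rw [hhat b, qtilde_key M Q (fun i => W i b) n]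
    ring
  calc (1 / 2) * ∑ b, |(∑ i ∈ Finset.range (n + 1), Q i * W i b) -
        (∑ i ∈ Finset.range (n + 1), Qhat M n Q i * W i b)|
      = (1 / 2) * ∑ b, |∑ i ∈ Finset.range n, r i * (W i b - W (i + 1) b)| := by
        congr 1; exact Finset.sum_congr rfl fun b _ => by rw [hdiff b]
    _ ≤ (1 / 2) * ∑ b, ∑ i ∈ Finset.range n, r i * |W i b - W (i + 1) b| := by
        have h : ∀ b : B, |∑ i ∈ Finset.range n, r i * (W i b - W (i + 1) b)|
            ≤ ∑ i ∈ Finset.range n, r i * |W i b - W (i + 1) b| := by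
          intro b
          refine (Finset.abs_sum_le_sum_abs _ _).trans ?_
          refine Finset.sum_le_sum fun i _ => ?_
          rw [abs_mul, abs_of_nonneg (hr0 i)]
        have := Finset.sum_le_sum (fun b (_ : b ∈ Finset.univ) => h b)
        linarith
    _ = ∑ i ∈ Finset.range n, r i * ((1 / 2) * ∑ b, |W i b - W (i + 1) b|) := by
        simp only [Finset.mul_sum]
        rw [Finset.sum_comm]
        refine Finset.sum_congr rfl fun i _ => ?_
        refine Finset.sum_congr rfl fun b _ => by ring
    _ ≤ ∑ i ∈ Finset.range n, (1 / M) * (C / Real.sqrt n) := by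
        refine Finset.sum_le_sum fun i hi => ?_
        rw [Finset.mem_range] at hi
        refine mul_le_mul (hr1 i) (hWlip i hi) ?_ (by positivity)
        have : (0:ℝ) ≤ ∑ b, |W i b - W (i + 1) b| :=
          Finset.sum_nonneg fun b _ => abs_nonneg _
        linarith
    _ = n * ((1 / M) * (C / Real.sqrt n)) := by
        rw [Finset.sum_const, Finset.card_range, nsmul_eq_mul]
    _ = C * Real.sqrt n / M := by
        have hs : Real.sqrt n > 0 := Real.sqrt_pos.mpr (by exact_mod_cast hn)
        have hsq : Real.sqrt n * Real.sqrt n = n := Real.mul_self_sqrt (by positivity)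
        conv_rhs => rw [← Real.div_sqrt]
        field_simp
end

section
/- Let q ≥ 2 and let u be a probability distribution on [1:q] with u_a > 0 and u_b > 0 for distinct a, b. Then for all sufficiently large n, D_ab(Mult_{n,u}) = sum over compositions t of n+1 of |Mult_{n,u}(t - e_b) - Mult_{n,u}(t - e_a)| is at most C·(log n)^{(|supp(u)|-2)/2} / sqrt(n), for a constant C depending only on u and q (not on n). -/
open Finset

namespace DabAux

variable {q : ℕ}

noncomputable def w (u : Fin q → ℝ) (t : Fin q → ℕ) : ℝ :=
  (Nat.multinomial Finset.univ t : ℝ) * ∏ i, u i ^ t i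

def S (q N : ℕ) : Finset (Fin q → ℕ) :=
  (Fintype.piFinset fun _ : Fin q => Finset.range (N + 1)).filter fun t => ∑ i, t i = N

lemma mem_S {N : ℕ} {x : Fin q → ℕ} : x ∈ S q N ↔ ∑ i, x i = N := by
  constructor
  · intro h; exact (Finset.mem_filter.mp h).2
  · intro h
    refine Finset.mem_filter.mpr ⟨Fintype.mem_piFinset.mpr fun i => ?_, h⟩
    refine Finset.mem_range.mpr (Nat.lt_succ_of_le ?_)
    calc x i ≤ ∑ j, x j := Finset.single_le_sum (fun j _ => Nat.zero_le _) (mem_univ i)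
    _ = N := h

lemma mult_cast (t : Fin q → ℕ) :
    (Nat.multinomial Finset.univ t : ℝ) =
      ((∑ i, t i).factorial : ℝ) / ∏ i, ((t i).factorial : ℝ) := by
  rw [eq_div_iff (by positivity), mul_comm]
  exact_mod_cast congrArg (Nat.cast : ℕ → ℝ) (Nat.multinomial_spec univ t)

lemma w_nonneg {u : Fin q → ℝ} (hu0 : ∀ i, 0 ≤ u i) (t : Fin q → ℕ) : 0 ≤ w u t := by
  unfold w
  have : 0 ≤ ∏ i, u i ^ t i := Finset.prod_nonneg fun i _ => pow_nonneg (hu0 i) _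
  positivity

lemma sum_update_succ (y : Fin q → ℕ) (i : Fin q) :
    ∑ j, Function.update y i (y i + 1) j = (∑ j, y j) + 1 := by
  rw [Finset.sum_update_of_mem (mem_univ i)]
  have h := Finset.sum_eq_sum_sdiff_singleton_add (mem_univ i) y
  omega

lemma step1 {u : Fin q → ℝ} (y : Fin q → ℕ) (i : Fin q) :
    w u (Function.update y i (y i + 1)) * (y i + 1) =
      ((∑ j, y j : ℕ) + 1) * u i * w u y := by
  unfold w
  rw [mult_cast, mult_cast, sum_update_succ]
  have hfac : ∏ j, ((Function.update y i (y i + 1) j).factorial : ℝ) =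
      (((y i + 1).factorial : ℕ) : ℝ) * ∏ j ∈ univ \ {i}, ((y j).factorial : ℝ) := by
    rw [← Finset.prod_update_of_mem (mem_univ i) (fun j => (((y j).factorial : ℕ) : ℝ))]
    refine Finset.prod_congr rfl fun j _ => ?_
    rcases eq_or_ne j i with rfl | hj
    · simp
    · simp [Function.update_of_ne hj]
  have hpow : ∏ j, u j ^ Function.update y i (y i + 1) j =
      (u i ^ (y i + 1)) * ∏ j ∈ univ \ {i}, u j ^ y j := by
    rw [← Finset.prod_update_of_mem (mem_univ i) (fun j => u j ^ y j)]
    refine Finset.prod_congr rfl fun j _ => ?_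
    rcases eq_or_ne j i with rfl | hj
    · simp
    · simp [Function.update_of_ne hj]
  rw [hfac, hpow]
  have hfacy : ∏ j, ((y j).factorial : ℝ) =
      ((y i).factorial : ℝ) * ∏ j ∈ univ \ {i}, ((y j).factorial : ℝ) :=
    Finset.prod_eq_mul_prod_sdiff_singleton_of_mem (mem_univ i) _
  have hpowy : ∏ j, u j ^ y j = u i ^ y i * ∏ j ∈ univ \ {i}, u j ^ y j :=
    Finset.prod_eq_mul_prod_sdiff_singleton_of_mem (mem_univ i) _
  rw [hfacy, hpowy]
  have h1 : (((y i + 1).factorial : ℕ) : ℝ) = ((y i : ℝ) + 1) * ((y i).factorial : ℝ) := by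
    rw [Nat.factorial_succ]; push_cast; ring
  have h2 : (((∑ j, y j) + 1).factorial : ℝ) =
      ((∑ j, y j : ℕ) + 1 : ℝ) * (((∑ j, y j : ℕ)).factorial : ℝ) := by
    rw [Nat.factorial_succ]; push_cast; ring
  rw [h1, h2, pow_succ]
  have hne1 : ((y i).factorial : ℝ) ≠ 0 := by positivity
  have hne2 : ∏ j ∈ univ \ {i}, ((y j).factorial : ℝ) ≠ 0 := by
    refine Finset.prod_ne_zero_iff.mpr fun j _ => by positivity
  have hne3 : ((y i : ℝ) + 1) ≠ 0 := by positivity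
  field_simp

lemma SB {N : ℕ} (i : Fin q) (F : (Fin q → ℕ) → ℝ) :
    ∑ t ∈ S q (N + 1), (if 0 < t i then F t else 0) =
      ∑ x ∈ S q N, F (Function.update x i (x i + 1)) := by
  rw [← Finset.sum_filter]
  refine Finset.sum_nbij' (fun t => Function.update t i (t i - 1))
    (fun x => Function.update x i (x i + 1)) ?_ ?_ ?_ ?_ ?_
  · intro t ht
    obtain ⟨htS, hti⟩ := Finset.mem_filter.mp ht
    have hsum := mem_S.mp htS
    refine mem_S.mpr ?_
    rw [Finset.sum_update_of_mem (mem_univ i)]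
    have h := Finset.sum_eq_sum_sdiff_singleton_add (mem_univ i) t
    omega
  · intro x hx
    have hsum := mem_S.mp hx
    refine Finset.mem_filter.mpr ⟨mem_S.mpr ?_, ?_⟩
    · rw [sum_update_succ]; omega
    · simp
  · intro t ht
    obtain ⟨htS, hti⟩ := Finset.mem_filter.mp ht
    funext j
    rcases eq_or_ne j i with rfl | hj
    · simp [Function.update_idem]; omega
    · simp [Function.update_of_ne hj]
  · intro x hx
    funext j
    rcases eq_or_ne j i with rfl | hj
    · simp [Function.update_idem]
    · simp [Function.update_of_ne hj]
  · intro t ht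
    obtain ⟨htS, hti⟩ := Finset.mem_filter.mp ht
    congr 1
    funext j
    rcases eq_or_ne j i with rfl | hj
    · simp [Function.update_idem]; omega
    · simp [Function.update_of_ne hj]

lemma E1 {u : Fin q → ℝ} (hu1 : ∑ i, u i = 1) :
    ∀ N, ∑ t ∈ S q N, w u t = 1 := by
  intro N
  induction N with
  | zero =>
    have hS : S q 0 = {fun _ => 0} := by
      ext x
      simp only [mem_S, Finset.mem_singleton]
      constructor
      · intro h; funext j
        have : x j ≤ ∑ i, x i := Finset.single_le_sum (fun j _ => Nat.zero_le _) (mem_univ j)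
        omega
      · intro h; subst h; simp
    rw [hS, Finset.sum_singleton]
    unfold w
    rw [mult_cast]
    simp
  | succ N ih =>
    have key : ∀ j : Fin q, ∑ t ∈ S q (N + 1), w u t * (t j : ℝ) =
        ((N : ℝ) + 1) * u j * ∑ x ∈ S q N, w u x := by
      intro j
      have h0 : ∑ t ∈ S q (N + 1), w u t * (t j : ℝ) =
          ∑ t ∈ S q (N + 1), (if 0 < t j then w u t * (t j : ℝ) else 0) := by
        refine Finset.sum_congr rfl fun t _ => ?_
        rcases Nat.eq_zero_or_pos (t j) with h | h
        · simp [h]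
        · rw [if_pos h]
      rw [h0, SB j (fun t => w u t * (t j : ℝ))]
      rw [Finset.mul_sum]
      refine Finset.sum_congr rfl fun x hx => ?_
      have hs := mem_S.mp hx
      have := step1 (u := u) x j
      rw [Function.update_self]
      push_cast
      rw [hs] at this
      push_cast at this
      linarith [this]
    have htot : ((N : ℝ) + 1) * ∑ t ∈ S q (N + 1), w u t =
        ((N : ℝ) + 1) * ∑ x ∈ S q N, w u x := by
      calc ((N : ℝ) + 1) * ∑ t ∈ S q (N + 1), w u t
          = ∑ t ∈ S q (N + 1), w u t * ((N : ℝ) + 1) := by rw [mul_comm, Finset.sum_mul]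
        _ = ∑ t ∈ S q (N + 1), ∑ j, w u t * (t j : ℝ) := by
            refine Finset.sum_congr rfl fun t ht => ?_
            rw [← Finset.mul_sum]
            have hs := mem_S.mp ht
            congr 1
            rw [← Nat.cast_sum _ t, hs]
            push_cast
            ring
        _ = ∑ j, ∑ t ∈ S q (N + 1), w u t * (t j : ℝ) := Finset.sum_comm
        _ = ∑ j, ((N : ℝ) + 1) * u j * ∑ x ∈ S q N, w u x := by
            exact Finset.sum_congr rfl fun j _ => key j
        _ = ((N : ℝ) + 1) * (∑ j, u j) * ∑ x ∈ S q N, w u x := by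
            rw [← Finset.sum_mul, ← Finset.mul_sum]
        _ = ((N : ℝ) + 1) * ∑ x ∈ S q N, w u x := by rw [hu1]; ring
    have hN : ((N : ℝ) + 1) ≠ 0 := by positivity
    rw [ih] at htot
    have := mul_left_cancel₀ hN htot
    simpa using this

lemma Emean {u : Fin q → ℝ} (hu1 : ∑ i, u i = 1) (N : ℕ) (j : Fin q) :
    ∑ t ∈ S q (N + 1), w u t * (t j : ℝ) = ((N : ℝ) + 1) * u j := by
  have h0 : ∑ t ∈ S q (N + 1), w u t * (t j : ℝ) =
      ∑ t ∈ S q (N + 1), (if 0 < t j then w u t * (t j : ℝ) else 0) := by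
    refine Finset.sum_congr rfl fun t _ => ?_
    rcases Nat.eq_zero_or_pos (t j) with h | h
    · simp [h]
    · rw [if_pos h]
  rw [h0, SB j (fun t => w u t * (t j : ℝ))]
  have : ∀ x ∈ S q N, w u (Function.update x j (x j + 1)) *
      ((Function.update x j (x j + 1) j : ℕ) : ℝ) = ((N : ℝ) + 1) * u j * w u x := by
    intro x hx
    have hs := mem_S.mp hx
    have h := step1 (u := u) x j
    rw [hs] at h
    rw [Function.update_self]
    push_cast at h ⊢
    linarith [h]
  rw [Finset.sum_congr rfl this, ← Finset.mul_sum, E1 hu1, mul_one]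
lemma Mij {u : Fin q → ℝ} (hu1 : ∑ i, u i = 1) (N : ℕ) {i j : Fin q} (hij : i ≠ j) :
    ∑ t ∈ S q (N + 2), w u t * (t i : ℝ) * (t j : ℝ) =
      ((N : ℝ) + 2) * ((N : ℝ) + 1) * u i * u j := by
  have h0 : ∑ t ∈ S q (N + 2), w u t * (t i : ℝ) * (t j : ℝ) =
      ∑ t ∈ S q (N + 1 + 1), (if 0 < t j then w u t * (t i : ℝ) * (t j : ℝ) else 0) := by
    refine Finset.sum_congr rfl fun t _ => ?_
    rcases Nat.eq_zero_or_pos (t j) with h | h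
    · simp [h]
    · rw [if_pos h]
  rw [h0, SB j (fun t => w u t * (t i : ℝ) * (t j : ℝ))]
  have key : ∀ x ∈ S q (N + 1), w u (Function.update x j (x j + 1)) *
      ((Function.update x j (x j + 1) i : ℕ) : ℝ) *
      ((Function.update x j (x j + 1) j : ℕ) : ℝ) =
      ((N : ℝ) + 2) * u j * (w u x * (x i : ℝ)) := by
    intro x hx
    have hs := mem_S.mp hx
    have h := step1 (u := u) x j
    rw [hs] at h
    rw [Function.update_self, Function.update_of_ne hij]
    push_cast at h ⊢
    nlinarith [h]
  rw [Finset.sum_congr rfl key, ← Finset.mul_sum]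
  have := Emean hu1 N i
  rw [this]
  ring

lemma Mii {u : Fin q → ℝ} (hu1 : ∑ i, u i = 1) (N : ℕ) (i : Fin q) :
    ∑ t ∈ S q (N + 2), w u t * (t i : ℝ) * ((t i : ℝ) - 1) =
      ((N : ℝ) + 2) * ((N : ℝ) + 1) * u i * u i := by
  have h0 : ∑ t ∈ S q (N + 2), w u t * (t i : ℝ) * ((t i : ℝ) - 1) =
      ∑ t ∈ S q (N + 1 + 1), (if 0 < t i then w u t * (t i : ℝ) * ((t i : ℝ) - 1) else 0) := by
    refine Finset.sum_congr rfl fun t _ => ?_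
    rcases Nat.eq_zero_or_pos (t i) with h | h
    · simp [h]
    · rw [if_pos h]
  rw [h0, SB i (fun t => w u t * (t i : ℝ) * ((t i : ℝ) - 1))]
  have key : ∀ x ∈ S q (N + 1), w u (Function.update x i (x i + 1)) *
      ((Function.update x i (x i + 1) i : ℕ) : ℝ) *
      (((Function.update x i (x i + 1) i : ℕ) : ℝ) - 1) =
      ((N : ℝ) + 2) * u i * (w u x * (x i : ℝ)) := by
    intro x hx
    have hs := mem_S.mp hx
    have h := step1 (u := u) x i
    rw [hs] at h
    rw [Function.update_self]
    push_cast at h ⊢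
    nlinarith [h]
  rw [Finset.sum_congr rfl key, ← Finset.mul_sum]
  rw [Emean hu1 N i]
  ring

lemma E2 {u : Fin q → ℝ} (hu1 : ∑ i, u i = 1) (N : ℕ) {a b : Fin q} (hab : a ≠ b) :
    ∑ t ∈ S q (N + 2), w u t * (u a * (t b : ℝ) - u b * (t a : ℝ)) ^ 2 =
      ((N : ℝ) + 2) * (u a * u b) * (u a + u b) := by
  have expand : ∀ t : Fin q → ℕ, w u t * (u a * (t b : ℝ) - u b * (t a : ℝ)) ^ 2 =
      u a ^ 2 * (w u t * (t b : ℝ) * ((t b : ℝ) - 1)) +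
      u b ^ 2 * (w u t * (t a : ℝ) * ((t a : ℝ) - 1)) -
      2 * u a * u b * (w u t * (t a : ℝ) * (t b : ℝ)) +
      (u a ^ 2 * (w u t * (t b : ℝ)) + u b ^ 2 * (w u t * (t a : ℝ))) := by
    intro t; ring
  rw [Finset.sum_congr rfl fun t _ => expand t]
  rw [Finset.sum_add_distrib, Finset.sum_sub_distrib, Finset.sum_add_distrib,
    Finset.sum_add_distrib, ← Finset.mul_sum, ← Finset.mul_sum, ← Finset.mul_sum,
    ← Finset.mul_sum, ← Finset.mul_sum]
  rw [Mii hu1 N b, Mii hu1 N a, Mij hu1 N hab]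
  have ha : ∑ t ∈ S q (N + 2), w u t * (t a : ℝ) = ((N : ℝ) + 2) * u a := by
    have := Emean hu1 (N + 1) a
    push_cast at this
    rw [show N + 1 + 1 = N + 2 from rfl] at this
    push_cast
    linarith [this]
  have hb : ∑ t ∈ S q (N + 2), w u t * (t b : ℝ) = ((N : ℝ) + 2) * u b := by
    have := Emean hu1 (N + 1) b
    push_cast at this
    rw [show N + 1 + 1 = N + 2 from rfl] at this
    push_cast
    linarith [this]
  rw [ha, hb]
  ring

lemma E3 {u : Fin q → ℝ} (hu0 : ∀ i, 0 ≤ u i) (hu1 : ∑ i, u i = 1) (N : ℕ)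
    {b : Fin q} (hub : 0 < u b) :
    ∑ x ∈ S q N, w u x / ((x b : ℝ) + 1) ≤ 1 / (((N : ℝ) + 1) * u b) := by
  have hrw : ∀ x ∈ S q N, w u x / ((x b : ℝ) + 1) =
      w u (Function.update x b (x b + 1)) * (1 / (((N : ℝ) + 1) * u b)) := by
    intro x hx
    have hs := mem_S.mp hx
    have h := step1 (u := u) x b
    rw [hs] at h
    push_cast at h
    rw [div_eq_iff (by positivity)]
    have hden : (((N : ℝ) + 1) * u b) ≠ 0 := by positivity
    field_simp
    linarith [h]
  rw [Finset.sum_congr rfl hrw, ← Finset.sum_mul]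
  have hle : ∑ x ∈ S q N, w u (Function.update x b (x b + 1)) ≤ 1 := by
    rw [← SB b (w u)]
    calc ∑ t ∈ S q (N + 1), (if 0 < t b then w u t else 0)
        ≤ ∑ t ∈ S q (N + 1), w u t := by
          refine Finset.sum_le_sum fun t _ => ?_
          split
          · exact le_refl _
          · exact w_nonneg hu0 t
      _ = 1 := E1 hu1 _
  calc (∑ x ∈ S q N, w u (Function.update x b (x b + 1))) * (1 / (((N : ℝ) + 1) * u b))
      ≤ 1 * (1 / (((N : ℝ) + 1) * u b)) := by
        refine mul_le_mul_of_nonneg_right hle (by positivity)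
    _ = 1 / (((N : ℝ) + 1) * u b) := one_mul _

lemma E4 {u : Fin q → ℝ} (hu0 : ∀ i, 0 ≤ u i) (hu1 : ∑ i, u i = 1) (N : ℕ)
    {b : Fin q} (hub : 0 < u b) :
    ∑ x ∈ S q N, w u x / (((x b : ℝ) + 1) ^ 2) ≤ 2 / ((((N : ℝ) + 1) ^ 2) * u b ^ 2) := by
  have key : ∀ x ∈ S q N, w u x / (((x b : ℝ) + 1) ^ 2) ≤
      w u (Function.update x b (x b + 2)) * (2 / ((((N : ℝ) + 1) * ((N : ℝ) + 2)) * u b ^ 2)) := by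
    intro x hx
    have hs := mem_S.mp hx
    have h1 := step1 (u := u) x b
    rw [hs] at h1
    have h2 := step1 (u := u) (Function.update x b (x b + 1)) b
    rw [Function.update_self, Function.update_idem] at h2
    have hs2 : ∑ j, Function.update x b (x b + 1) j = N + 1 := by
      rw [sum_update_succ, hs]
    rw [hs2] at h2
    rw [show x b + 1 + 1 = x b + 2 from rfl] at h2
    -- combine: w (Φ²x) * (xb+1) * (xb+2) = (N+1)(N+2) u_b^2 w x
    have hcomb : w u (Function.update x b (x b + 2)) * ((x b : ℝ) + 1) * ((x b : ℝ) + 2) =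
        (((N : ℝ) + 1) * ((N : ℝ) + 2)) * u b ^ 2 * w u x := by
      push_cast at h1 h2
      linear_combination (((x b : ℝ)) + 1) * h2 + (((N : ℝ) + 2)) * u b * h1
    have hwnn := w_nonneg hu0 x
    have hwnn2 := w_nonneg hu0 (Function.update x b (x b + 2))
    have hb1 : (0:ℝ) < (x b : ℝ) + 1 := by positivity
    have hNN : (0:ℝ) < (((N : ℝ) + 1) * ((N : ℝ) + 2)) * u b ^ 2 := by positivity
    have hrw2 : w u (Function.update x b (x b + 2)) *
        (2 / ((((N : ℝ) + 1) * ((N : ℝ) + 2)) * u b ^ 2)) =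
        (w u (Function.update x b (x b + 2)) * 2) /
          ((((N : ℝ) + 1) * ((N : ℝ) + 2)) * u b ^ 2) := by ring
    rw [hrw2, div_le_div_iff₀ (by positivity) (by positivity)]
    have hstep : (0:ℝ) ≤ 2 * ((x b : ℝ) + 1) - ((x b : ℝ) + 2) := by
      have := Nat.cast_nonneg (α := ℝ) (x b); linarith
    nlinarith [mul_nonneg (mul_nonneg hwnn2 hb1.le) hstep, hcomb]
  calc ∑ x ∈ S q N, w u x / (((x b : ℝ) + 1) ^ 2)
      ≤ ∑ x ∈ S q N, w u (Function.update x b (x b + 2)) *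
          (2 / ((((N : ℝ) + 1) * ((N : ℝ) + 2)) * u b ^ 2)) := Finset.sum_le_sum key
    _ ≤ 1 * (2 / ((((N : ℝ) + 1) * ((N : ℝ) + 2)) * u b ^ 2)) := by
        rw [← Finset.sum_mul]
        refine mul_le_mul_of_nonneg_right ?_ (by positivity)
        -- ∑ w(Φ²x) ≤ 1
        have h1 : ∑ x ∈ S q N, w u (Function.update x b (x b + 2)) =
            ∑ t ∈ S q (N + 1), (if 0 < t b then w u (Function.update t b (t b + 1)) else 0) := by
          rw [SB b (fun t => w u (Function.update t b (t b + 1)))]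
          refine Finset.sum_congr rfl fun x _ => ?_
          rw [Function.update_self, Function.update_idem]
        rw [h1]
        calc ∑ t ∈ S q (N + 1), (if 0 < t b then w u (Function.update t b (t b + 1)) else 0)
            ≤ ∑ t ∈ S q (N + 1), w u (Function.update t b (t b + 1)) := by
              refine Finset.sum_le_sum fun t _ => ?_
              split
              · exact le_refl _
              · exact w_nonneg hu0 _
          _ = ∑ s ∈ S q (N + 1 + 1), (if 0 < s b then w u s else 0) := (SB b (w u)).symm
          _ ≤ ∑ s ∈ S q (N + 2), w u s := by
              refine Finset.sum_le_sum fun s _ => ?_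
              split
              · exact le_refl _
              · exact w_nonneg hu0 _
          _ = 1 := E1 hu1 _
    _ = 2 / ((((N : ℝ) + 1) * ((N : ℝ) + 2)) * u b ^ 2) := one_mul _
    _ ≤ 2 / ((((N : ℝ) + 1) ^ 2) * u b ^ 2) := by
        have hle2 : (((N : ℝ) + 1) ^ 2) * u b ^ 2 ≤ (((N : ℝ) + 1) * ((N : ℝ) + 2)) * u b ^ 2 := by
          have h0 : (0:ℝ) ≤ (N:ℝ) := Nat.cast_nonneg N
          nlinarith [sq_nonneg (u b)]
        exact div_le_div_of_nonneg_left (by norm_num) (by positivity) hle2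
lemma hPMF {u : Fin q → ℝ} {n : ℕ} {t : Fin q → ℕ} (ht : ∑ i, t i = n + 1) (c : Fin q) :
    multPMF q n u (Function.update t c (t c - 1)) =
      if 0 < t c then w u (Function.update t c (t c - 1)) else 0 := by
  rcases Nat.eq_zero_or_pos (t c) with h | h
  · rw [if_neg (by omega)]
    have : Function.update t c (t c - 1) = t := by
      have h1 : t c - 1 = t c := by omega
      rw [h1]; exact Function.update_eq_self c t
    rw [this]
    unfold multPMF
    rw [if_neg (by omega)]
  · rw [if_pos h]
    have hsum : ∑ i, Function.update t c (t c - 1) i = n := by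
      rw [Finset.sum_update_of_mem (mem_univ c)]
      have := Finset.sum_eq_sum_sdiff_singleton_add (mem_univ c) t
      omega
    unfold multPMF w
    rw [if_pos hsum]

lemma swap_id {u : Fin q → ℝ} {n : ℕ} {a b : Fin q} (hab : a ≠ b) {x : Fin q → ℕ}
    (hs : ∑ i, x i = n) (hxa : 0 < x a) :
    w u (Function.update (Function.update x b (x b + 1)) a (x a - 1)) *
        (((x b : ℝ) + 1) * u a) = w u x * ((x a : ℝ) * u b) := by
  obtain ⟨m, hm⟩ : ∃ m, x a = m + 1 := ⟨x a - 1, by omega⟩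
  set y := Function.update x a m with hy
  have hyb : y b = x b := Function.update_of_ne (Ne.symm hab) m x
  have hya : y a = m := Function.update_self a m x
  have hxy : Function.update y a (m + 1) = x := by
    rw [hy, Function.update_idem, ← hm]
    exact Function.update_eq_self a x
  have hsy : (∑ j, y j) + 1 = n := by
    rw [hy, Finset.sum_update_of_mem (mem_univ a)]
    have := Finset.sum_eq_sum_sdiff_singleton_add (mem_univ a) x
    omega
  have h1 := step1 (u := u) y a
  rw [hya, hxy] at h1
  have h2 := step1 (u := u) y b
  rw [hyb] at h2
  have hcomm : Function.update y b (x b + 1) =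
      Function.update (Function.update x b (x b + 1)) a (x a - 1) := by
    rw [hy, hm]
    simp only [Nat.add_sub_cancel]
    exact (Function.update_comm (Ne.symm hab) (x b + 1) m x).symm
  rw [hcomm] at h2
  have hn1 : (∑ j, ((y j : ℕ) : ℝ)) + 1 = (n : ℝ) := by exact_mod_cast hsy
  have hma : (m : ℝ) + 1 = (x a : ℝ) := by exact_mod_cast congrArg (Nat.cast (R := ℝ)) hm.symm
  push_cast at h1 h2
  rw [hma] at h1
  rw [hn1] at h1 h2
  linear_combination u a * h2 - u b * h1

lemma xterm {u : Fin q → ℝ} (hu0 : ∀ i, 0 ≤ u i) {n : ℕ} {a b : Fin q} (hab : a ≠ b)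
    (hua : 0 < u a) {x : Fin q → ℕ} (hs : ∑ i, x i = n) :
    |w u x - (if 0 < x a then
        w u (Function.update (Function.update x b (x b + 1)) a (x a - 1)) else 0)| =
      w u x * |((x b : ℝ) + 1) * u a - (x a : ℝ) * u b| / (((x b : ℝ) + 1) * u a) := by
  have hD : (0:ℝ) < ((x b : ℝ) + 1) * u a := by positivity
  rcases Nat.eq_zero_or_pos (x a) with h | h
  · rw [if_neg (by omega), h]
    simp only [Nat.cast_zero, zero_mul, sub_zero]
    rw [abs_of_nonneg (w_nonneg hu0 x), abs_of_pos hD]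
    field_simp
  · rw [if_pos h]
    have hsw := swap_id (u := u) hab hs h
    have hx' : w u (Function.update (Function.update x b (x b + 1)) a (x a - 1)) =
        w u x * ((x a : ℝ) * u b) / (((x b : ℝ) + 1) * u a) := by
      rw [eq_div_iff hD.ne']; exact hsw
    rw [hx']
    rw [show w u x - w u x * ((x a : ℝ) * u b) / (((x b : ℝ) + 1) * u a) =
      w u x * ((((x b : ℝ) + 1) * u a - (x a : ℝ) * u b) / (((x b : ℝ) + 1) * u a)) by
        field_simp]
    rw [abs_mul, abs_of_nonneg (w_nonneg hu0 x), abs_div, abs_of_pos hD, mul_div_assoc]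
lemma CS {u : Fin q → ℝ} (hu0 : ∀ i, 0 ≤ u i) (n : ℕ) (a b : Fin q) :
    ∑ x ∈ S q n, w u x * |u a * (x b : ℝ) - u b * (x a : ℝ)| / ((x b : ℝ) + 1) ≤
      Real.sqrt ((∑ x ∈ S q n, w u x * (u a * (x b : ℝ) - u b * (x a : ℝ)) ^ 2) *
        (∑ x ∈ S q n, w u x / (((x b : ℝ) + 1) ^ 2))) := by
  set f : (Fin q → ℕ) → ℝ := fun x => Real.sqrt (w u x) * |u a * (x b : ℝ) - u b * (x a : ℝ)|
    with hf
  set g : (Fin q → ℕ) → ℝ := fun x => Real.sqrt (w u x) / ((x b : ℝ) + 1) with hg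
  have hfg : ∀ x : Fin q → ℕ, f x * g x =
      w u x * |u a * (x b : ℝ) - u b * (x a : ℝ)| / ((x b : ℝ) + 1) := by
    intro x
    rw [hf, hg]
    rw [show (Real.sqrt (w u x) * |u a * (x b : ℝ) - u b * (x a : ℝ)|) *
        (Real.sqrt (w u x) / ((x b : ℝ) + 1)) =
        (Real.sqrt (w u x) * Real.sqrt (w u x)) * |u a * (x b : ℝ) - u b * (x a : ℝ)| /
          ((x b : ℝ) + 1) from by ring]
    rw [Real.mul_self_sqrt (w_nonneg hu0 x)]
  have hf2 : ∀ x : Fin q → ℕ, f x ^ 2 = w u x * (u a * (x b : ℝ) - u b * (x a : ℝ)) ^ 2 := by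
    intro x
    rw [hf, mul_pow, Real.sq_sqrt (w_nonneg hu0 x), sq_abs]
  have hg2 : ∀ x : Fin q → ℕ, g x ^ 2 = w u x / (((x b : ℝ) + 1) ^ 2) := by
    intro x
    rw [hg, div_pow, Real.sq_sqrt (w_nonneg hu0 x)]
  rw [← Finset.sum_congr rfl fun x _ => hfg x,
    ← Finset.sum_congr rfl fun x _ => hf2 x, ← Finset.sum_congr rfl fun x _ => hg2 x]
  have hnn : 0 ≤ ∑ x ∈ S q n, f x * g x := by
    refine Finset.sum_nonneg fun x _ => ?_
    rw [hfg x]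
    have := w_nonneg hu0 x
    positivity
  rw [Real.le_sqrt hnn]
  · exact Finset.sum_mul_sq_le_sq_mul_sq _ f g
  · exact mul_nonneg (Finset.sum_nonneg fun x _ => sq_nonneg _)
      (Finset.sum_nonneg fun x _ => sq_nonneg _)

lemma Tbound {u : Fin q → ℝ} (hu0 : ∀ i, 0 ≤ u i) (hu1 : ∑ i, u i = 1)
    {a b : Fin q} (hab : a ≠ b) (hua : 0 < u a) (hub : 0 < u b)
    (n : ℕ) (hn : 2 ≤ n) :
    ∑ t ∈ S q (n + 1),
      |multPMF q n u (Function.update t b (t b - 1)) -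
        multPMF q n u (Function.update t a (t a - 1))| ≤
      (Real.sqrt 2 / (u a * u b) + 2 / u b) / Real.sqrt n := by
  have hnR : (0:ℝ) < (n:ℝ) := by
    have : 0 < n := by omega
    exact_mod_cast this
  have hsn : 0 < Real.sqrt n := Real.sqrt_pos.mpr hnR
  -- step 1 : split the absolute value
  have hsplit : ∀ t ∈ S q (n + 1),
      |multPMF q n u (Function.update t b (t b - 1)) -
        multPMF q n u (Function.update t a (t a - 1))| =
      (if 0 < t b then
          |w u (Function.update t b (t b - 1)) -
            (if 0 < t a then w u (Function.update t a (t a - 1)) else 0)| else 0) +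
      (if 0 < t b then (0:ℝ) else
          (if 0 < t a then w u (Function.update t a (t a - 1)) else 0)) := by
    intro t ht
    have hts := mem_S.mp ht
    rw [hPMF hts b, hPMF hts a]
    by_cases h : 0 < t b
    · simp only [if_pos h, add_zero]
    · simp only [if_neg h, zero_sub, abs_neg, zero_add]
      by_cases ha : 0 < t a
      · simp only [if_pos ha, abs_of_nonneg (w_nonneg hu0 (Function.update t a (t a - 1)))]
      · simp only [if_neg ha, abs_zero]
  rw [Finset.sum_congr rfl hsplit, Finset.sum_add_distrib]
  -- step 2 : T1
  have hT1 : ∑ t ∈ S q (n + 1),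
      (if 0 < t b then
          |w u (Function.update t b (t b - 1)) -
            (if 0 < t a then w u (Function.update t a (t a - 1)) else 0)| else 0) =
      ∑ x ∈ S q n, w u x * |((x b : ℝ) + 1) * u a - (x a : ℝ) * u b| /
        (((x b : ℝ) + 1) * u a) := by
    rw [SB b (fun t => |w u (Function.update t b (t b - 1)) -
        (if 0 < t a then w u (Function.update t a (t a - 1)) else 0)|)]
    refine Finset.sum_congr rfl fun x hx => ?_
    have hxs := mem_S.mp hx
    have e2 : Function.update (Function.update x b (x b + 1)) b
        (Function.update x b (x b + 1) b - 1) = x := by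
      rw [Function.update_self, Nat.add_sub_cancel, Function.update_idem]
      exact Function.update_eq_self b x
    have e3 : Function.update x b (x b + 1) a = x a := Function.update_of_ne hab _ _
    simp only [e2, e3]
    exact xterm hu0 hab hua hxs
  -- pointwise bound for T1
  have hT1b : ∑ x ∈ S q n, w u x * |((x b : ℝ) + 1) * u a - (x a : ℝ) * u b| /
        (((x b : ℝ) + 1) * u a) ≤
      (∑ x ∈ S q n, w u x * |u a * (x b : ℝ) - u b * (x a : ℝ)| / ((x b : ℝ) + 1)) * (1 / u a)
        + ∑ x ∈ S q n, w u x / ((x b : ℝ) + 1) := by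
    rw [Finset.sum_mul, ← Finset.sum_add_distrib]
    refine Finset.sum_le_sum fun x hx => ?_
    have hw := w_nonneg hu0 x
    have hD : (0:ℝ) < ((x b : ℝ) + 1) * u a := by positivity
    have hW : |((x b : ℝ) + 1) * u a - (x a : ℝ) * u b| ≤
        |u a * (x b : ℝ) - u b * (x a : ℝ)| + u a := by
      rw [show ((x b : ℝ) + 1) * u a - (x a : ℝ) * u b =
        (u a * (x b : ℝ) - u b * (x a : ℝ)) + u a from by ring]
      calc |(u a * (x b : ℝ) - u b * (x a : ℝ)) + u a| ≤
          |u a * (x b : ℝ) - u b * (x a : ℝ)| + |u a| := abs_add_le _ _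
        _ = |u a * (x b : ℝ) - u b * (x a : ℝ)| + u a := by rw [abs_of_pos hua]
    calc w u x * |((x b : ℝ) + 1) * u a - (x a : ℝ) * u b| / (((x b : ℝ) + 1) * u a) ≤
        w u x * (|u a * (x b : ℝ) - u b * (x a : ℝ)| + u a) / (((x b : ℝ) + 1) * u a) := by
          exact (div_le_div_iff_of_pos_right hD).mpr (mul_le_mul_of_nonneg_left hW hw)
      _ = w u x * |u a * (x b : ℝ) - u b * (x a : ℝ)| / ((x b : ℝ) + 1) * (1 / u a)
            + w u x / ((x b : ℝ) + 1) := by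
          field_simp
  -- second moment bound
  have hS2 : ∑ x ∈ S q n, w u x * (u a * (x b : ℝ) - u b * (x a : ℝ)) ^ 2 ≤ (n : ℝ) := by
    obtain ⟨m, rfl⟩ : ∃ m, n = m + 2 := ⟨n - 2, by omega⟩
    rw [E2 hu1 m hab]
    have h1 : u a ≤ 1 := by
      have h := Finset.single_le_sum (f := u) (fun i _ => hu0 i) (mem_univ a)
      rw [hu1] at h; exact h
    have h2 : u b ≤ 1 := by
      have h := Finset.single_le_sum (f := u) (fun i _ => hu0 i) (mem_univ b)
      rw [hu1] at h; exact h
    have h3 : u a + u b ≤ 1 := by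
      have h := Finset.sum_le_sum_of_subset_of_nonneg
        (Finset.subset_univ ({a, b} : Finset (Fin q))) (fun i _ _ => hu0 i)
      rw [Finset.sum_pair hab, hu1] at h; exact h
    have hm0 : (0:ℝ) ≤ (m:ℝ) := Nat.cast_nonneg m
    have hP1 : u a * u b ≤ 1 := by nlinarith [hua.le, hub.le]
    have hPs : (u a * u b) * (u a + u b) ≤ 1 := by
      nlinarith [mul_nonneg hua.le hub.le, hP1, h3, hua.le, hub.le]
    have hfin := mul_le_mul_of_nonneg_left hPs (show (0:ℝ) ≤ (m:ℝ) + 2 by linarith)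
    push_cast
    nlinarith [hfin]
  have hS4 := E4 hu0 hu1 n hub
  have hS4nn : 0 ≤ ∑ x ∈ S q n, w u x / (((x b : ℝ) + 1) ^ 2) := by
    refine Finset.sum_nonneg fun x _ => ?_
    have := w_nonneg hu0 x
    positivity
  -- Cauchy-Schwarz chain
  have hA : ∑ x ∈ S q n, w u x * |u a * (x b : ℝ) - u b * (x a : ℝ)| / ((x b : ℝ) + 1) ≤
      Real.sqrt 2 / (Real.sqrt n * u b) := by
    refine le_trans (CS hu0 n a b) ?_
    have hin : (∑ x ∈ S q n, w u x * (u a * (x b : ℝ) - u b * (x a : ℝ)) ^ 2) *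
        (∑ x ∈ S q n, w u x / (((x b : ℝ) + 1) ^ 2)) ≤ 2 / ((n : ℝ) * u b ^ 2) := by
      calc (∑ x ∈ S q n, w u x * (u a * (x b : ℝ) - u b * (x a : ℝ)) ^ 2) *
          (∑ x ∈ S q n, w u x / (((x b : ℝ) + 1) ^ 2)) ≤
          (n : ℝ) * (2 / ((((n : ℝ) + 1) ^ 2) * u b ^ 2)) :=
            mul_le_mul hS2 hS4 hS4nn (Nat.cast_nonneg n)
        _ = ((n : ℝ) * 2) / ((((n : ℝ) + 1) ^ 2) * u b ^ 2) := by rw [mul_div_assoc']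
        _ ≤ 2 / ((n : ℝ) * u b ^ 2) := by
            rw [div_le_div_iff₀ (by positivity) (by positivity)]
            nlinarith [mul_nonneg (mul_nonneg hnR.le hnR.le) (sq_nonneg (u b)),
              mul_nonneg hnR.le (sq_nonneg (u b)), sq_nonneg (u b)]
    calc Real.sqrt ((∑ x ∈ S q n, w u x * (u a * (x b : ℝ) - u b * (x a : ℝ)) ^ 2) *
        (∑ x ∈ S q n, w u x / (((x b : ℝ) + 1) ^ 2))) ≤
        Real.sqrt (2 / ((n : ℝ) * u b ^ 2)) := Real.sqrt_le_sqrt hin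
      _ = Real.sqrt 2 / (Real.sqrt n * u b) := by
          rw [Real.sqrt_div (by norm_num : (0:ℝ) ≤ 2), Real.sqrt_mul (Nat.cast_nonneg n),
            Real.sqrt_sq hub.le]
  have hE3 := E3 hu0 hu1 n hub
  -- T2 bound
  have hT2 : ∑ t ∈ S q (n + 1), (if 0 < t b then (0:ℝ) else
      (if 0 < t a then w u (Function.update t a (t a - 1)) else 0)) ≤
      1 / (((n : ℝ) + 1) * u b) := by
    have hsw : ∀ t : Fin q → ℕ, (if 0 < t b then (0:ℝ) else
        (if 0 < t a then w u (Function.update t a (t a - 1)) else 0)) =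
        (if 0 < t a then (if 0 < t b then (0:ℝ)
          else w u (Function.update t a (t a - 1))) else 0) := by
      intro t
      by_cases h1 : 0 < t b <;> by_cases h2 : 0 < t a <;> simp [h1, h2]
    rw [Finset.sum_congr rfl fun t _ => hsw t]
    rw [SB a (fun t => if 0 < t b then (0:ℝ) else w u (Function.update t a (t a - 1)))]
    refine le_trans (Finset.sum_le_sum ?_) hE3
    intro x hx
    have e1 : Function.update x a (x a + 1) b = x b := Function.update_of_ne (Ne.symm hab) _ _
    have e2 : Function.update (Function.update x a (x a + 1)) a
        (Function.update x a (x a + 1) a - 1) = x := by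
      rw [Function.update_self, Nat.add_sub_cancel, Function.update_idem]
      exact Function.update_eq_self a x
    simp only [e1, e2]
    by_cases h : 0 < x b
    · rw [if_pos h]
      have := w_nonneg hu0 x
      positivity
    · rw [if_neg h]
      have hxb : x b = 0 := by omega
      rw [hxb]
      norm_num
  -- assemble
  rw [hT1]
  have final1 : (Real.sqrt 2 / (Real.sqrt n * u b)) * (1 / u a) =
      (Real.sqrt 2 / (u a * u b)) / Real.sqrt n := by
    field_simp
  have hsle : Real.sqrt n ≤ (n : ℝ) + 1 := by
    have h1 : Real.sqrt n ≤ Real.sqrt (((n : ℝ) + 1) ^ 2) :=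
      Real.sqrt_le_sqrt (by nlinarith [Nat.cast_nonneg (α := ℝ) n])
    rwa [Real.sqrt_sq (by positivity)] at h1
  have final2 : 1 / (((n : ℝ) + 1) * u b) + 1 / (((n : ℝ) + 1) * u b) ≤
      (2 / u b) / Real.sqrt n := by
    have key : (2:ℝ) / (((n : ℝ) + 1) * u b) ≤ 2 / (Real.sqrt n * u b) :=
      div_le_div_of_nonneg_left (by norm_num) (by positivity)
        (mul_le_mul_of_nonneg_right hsle hub.le)
    calc 1 / (((n : ℝ) + 1) * u b) + 1 / (((n : ℝ) + 1) * u b)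
        = 2 / (((n : ℝ) + 1) * u b) := by ring
      _ ≤ 2 / (Real.sqrt n * u b) := key
      _ = (2 / u b) / Real.sqrt n := by rw [div_div, mul_comm]
  calc (∑ x ∈ S q n, w u x * |((x b : ℝ) + 1) * u a - (x a : ℝ) * u b| /
          (((x b : ℝ) + 1) * u a)) +
        ∑ t ∈ S q (n + 1), (if 0 < t b then (0:ℝ) else
          (if 0 < t a then w u (Function.update t a (t a - 1)) else 0)) ≤
      ((∑ x ∈ S q n, w u x * |u a * (x b : ℝ) - u b * (x a : ℝ)| / ((x b : ℝ) + 1)) * (1 / u a)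
        + ∑ x ∈ S q n, w u x / ((x b : ℝ) + 1)) + 1 / (((n : ℝ) + 1) * u b) :=
        add_le_add hT1b hT2
    _ ≤ ((Real.sqrt 2 / (Real.sqrt n * u b)) * (1 / u a) + 1 / (((n : ℝ) + 1) * u b))
          + 1 / (((n : ℝ) + 1) * u b) := by
        refine add_le_add_left (add_le_add ?_ hE3) _
        exact mul_le_mul_of_nonneg_right hA (by positivity)
    _ = (Real.sqrt 2 / (Real.sqrt n * u b)) * (1 / u a) +
          (1 / (((n : ℝ) + 1) * u b) + 1 / (((n : ℝ) + 1) * u b)) := by ring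
    _ ≤ (Real.sqrt 2 / (u a * u b)) / Real.sqrt n + (2 / u b) / Real.sqrt n := by
        rw [final1]
        exact add_le_add_right final2 _
    _ = (Real.sqrt 2 / (u a * u b) + 2 / u b) / Real.sqrt n := by rw [← add_div]
end DabAux

/-- If `u a > 0` and `u b > 0`, then for all sufficiently large `n`,
`D_ab(Mult_{n,u}) ≤ C · (log n)^{(|supp u| - 2)/2} / √n` for a constant `C`
independent of `n`. -/
theorem Dab_bound (q : ℕ) (hq : 2 ≤ q) (u : Fin q → ℝ)
    (hu0 : ∀ i, 0 ≤ u i) (hu1 : ∑ i, u i = 1)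
    (a b : Fin q) (hab : a ≠ b) (hua : 0 < u a) (hub : 0 < u b) :
    ∃ C : ℝ, 0 < C ∧ ∃ N : ℕ, ∀ n ≥ N,
      (∑ t ∈ (Fintype.piFinset fun _ : Fin q => Finset.range (n + 2)).filter
          (fun t => ∑ i, t i = n + 1),
        |multPMF q n u (Function.update t b (t b - 1)) -
          multPMF q n u (Function.update t a (t a - 1))|) ≤
        C * (Real.log n) ^
            ((((Finset.univ.filter fun i => u i ≠ 0).card : ℝ) - 2) / 2) /
          Real.sqrt n := by
  have hC0 : (0:ℝ) < Real.sqrt 2 / (u a * u b) + 2 / u b :=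
    add_pos (div_pos (Real.sqrt_pos.mpr two_pos) (mul_pos hua hub)) (div_pos two_pos hub)
  refine ⟨Real.sqrt 2 / (u a * u b) + 2 / u b, hC0, 3, ?_⟩
  intro n hn
  have hnR : (0:ℝ) < (n:ℝ) := by
    have : 0 < n := by omega
    exact_mod_cast this
  have hsn : 0 < Real.sqrt n := Real.sqrt_pos.mpr hnR
  have hT := DabAux.Tbound hu0 hu1 hab hua hub n (by omega)
  refine le_trans hT ?_
  have he : (0:ℝ) ≤ (((Finset.univ.filter fun i => u i ≠ 0).card : ℝ) - 2) / 2 := by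
    have hsub : ({a, b} : Finset (Fin q)) ⊆ Finset.univ.filter (fun i => u i ≠ 0) := by
      intro i hi
      rcases Finset.mem_insert.mp hi with rfl | hi'
      · exact Finset.mem_filter.mpr ⟨Finset.mem_univ _, hua.ne'⟩
      · rw [Finset.mem_singleton] at hi'
        subst hi'
        exact Finset.mem_filter.mpr ⟨Finset.mem_univ _, hub.ne'⟩
    have hcard : 2 ≤ (Finset.univ.filter fun i => u i ≠ 0).card := by
      have h := Finset.card_le_card hsub
      rwa [Finset.card_pair hab] at h
    have h2 : (2:ℝ) ≤ ((Finset.univ.filter fun i => u i ≠ 0).card : ℝ) := by exact_mod_cast hcard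
    linarith
  have hlog : (1:ℝ) ≤ Real.log n := by
    rw [Real.le_log_iff_exp_le hnR]
    have h3 : (3:ℝ) ≤ (n:ℝ) := by exact_mod_cast hn
    have := Real.exp_one_lt_d9
    linarith
  have hpow : (1:ℝ) ≤ (Real.log n) ^
      ((((Finset.univ.filter fun i => u i ≠ 0).card : ℝ) - 2) / 2) :=
    Real.one_le_rpow hlog he
  calc (Real.sqrt 2 / (u a * u b) + 2 / u b) / Real.sqrt n
      = (Real.sqrt 2 / (u a * u b) + 2 / u b) * 1 / Real.sqrt n := by rw [mul_one]
    _ ≤ (Real.sqrt 2 / (u a * u b) + 2 / u b) * (Real.log n) ^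
          ((((Finset.univ.filter fun i => u i ≠ 0).card : ℝ) - 2) / 2) / Real.sqrt n := by
        refine (div_le_div_iff_of_pos_right hsn).mpr ?_
        exact mul_le_mul_of_nonneg_left hpow hC0.le
end
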